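/- arXiv:math/0211318 — 4 statements merged into one kernel-verified Lean document; each statement's English description precedes it below -/
import Mathlib

section
/- The number of Dyck paths of length 2n with exactly k descents (valleys, i.e., occurrences of the factor hv) equals the Narayana number N(n,k) = (1/n) * C(n,k) * C(n,k+1). -/
open Finset

/-- The `i`-th letter (1-indexed) of a word `w`; `true` = vertical step `v`,
`false` = horizontal step `h`; junk value `false` out of range. -/
def ltr {m : ℕ} (w : Fin m → Bool) (i : ℕ) : Bool :=
  if h : 1 ≤ i ∧ i ≤ m then w ⟨i - 1, by omega⟩ else false

/-- The number of occurrences of the letter `b` among the first `i` letters of `w`. -/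
def pcnt {m : ℕ} (w : Fin m → Bool) (b : Bool) (i : ℕ) : ℕ :=
  ((Finset.Icc 1 i).filter fun j => ltr w j = b).card

/-- `w` is a Dyck path of length `2n`: `n` vertical steps and every prefix has at
least as many `v`'s as `h`'s. -/
def IsDyck (n : ℕ) (w : Fin (2 * n) → Bool) : Prop :=
  pcnt w true (2 * n) = n ∧ ∀ i ≤ 2 * n, pcnt w false i ≤ pcnt w true i

/-- The descent (valley) set of `w`: positions `i` with `w_i = h`, `w_{i+1} = v`. -/
def Des {n : ℕ} (w : Fin (2 * n) → Bool) : Finset ℕ :=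
  (Finset.Icc 1 (2 * n - 1)).filter fun i => ltr w i = false ∧ ltr w (i + 1) = true


def cnt (S : Finset ℕ) (t : ℕ) : ℕ := (S.filter (· ≤ t)).card

lemma cnt_mono (S : Finset ℕ) {t t' : ℕ} (h : t ≤ t') : cnt S t ≤ cnt S t' := by
  apply Finset.card_le_card
  intro x hx
  simp only [cnt, Finset.mem_filter] at *
  exact ⟨hx.1, hx.2.trans h⟩

lemma cnt_succ (S : Finset ℕ) (t : ℕ) :
    cnt S (t + 1) = cnt S t + (if (t+1) ∈ S then 1 else 0) := by
  unfold cnt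
  have hsplit : S.filter (· ≤ t + 1) = (S.filter (· ≤ t)) ∪ (S.filter (· = t+1)) := by
    ext x; simp only [Finset.mem_filter, Finset.mem_union]
    constructor
    · rintro ⟨hx, hle⟩
      rcases Nat.lt_or_ge x (t+1) with h | h
      · exact Or.inl ⟨hx, by omega⟩
      · exact Or.inr ⟨hx, by omega⟩
    · rintro (⟨hx, hle⟩ | ⟨hx, rfl⟩)
      · exact ⟨hx, by omega⟩
      · exact ⟨hx, le_refl _⟩
  rw [hsplit, Finset.card_union_of_disjoint, Finset.filter_eq' S (t+1)]
  · split_ifs <;> simp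
  · rw [Finset.disjoint_left]
    intro x hx hx2
    simp only [Finset.mem_filter] at hx hx2
    omega

lemma cnt_zero (S : Finset ℕ) (h0 : 0 ∉ S) : cnt S 0 = 0 := by
  unfold cnt
  rw [Finset.card_eq_zero]
  ext x; simp only [Finset.mem_filter, Nat.le_zero, Finset.notMem_empty, iff_false]
  rintro ⟨hx, rfl⟩; exact h0 hx

lemma cnt_eq_card (S : Finset ℕ) {t : ℕ} (h : ∀ x ∈ S, x ≤ t) : cnt S t = S.card := by
  unfold cnt
  congr 1
  apply Finset.filter_true_of_mem h

lemma cnt_le_card (S : Finset ℕ) (t : ℕ) : cnt S t ≤ S.card :=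
  Finset.card_le_card (Finset.filter_subset _ _)

lemma cnt_pred (S : Finset ℕ) {t : ℕ} (ht : 1 ≤ t) :
    cnt S t = cnt S (t - 1) + (if t ∈ S then 1 else 0) := by
  obtain ⟨s, rfl⟩ : ∃ s, t = s + 1 := ⟨t - 1, by omega⟩
  simpa using cnt_succ S s

lemma mem_iff_cnt (S : Finset ℕ) {t : ℕ} (ht : 1 ≤ t) :
    t ∈ S ↔ cnt S (t - 1) < cnt S t := by
  rw [cnt_pred S ht]
  split_ifs with h <;> simp [h]

lemma cnt_succ_le (S : Finset ℕ) (t : ℕ) : cnt S (t + 1) ≤ cnt S t + 1 := by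
  rw [cnt_succ]; split_ifs <;> omega

/-- there is an element of any given rank `j`, `1 ≤ j ≤ S.card`. -/
lemma exists_rank (S : Finset ℕ) {m j : ℕ} (hS : ∀ x ∈ S, 1 ≤ x ∧ x ≤ m)
    (hj1 : 1 ≤ j) (hjc : j ≤ S.card) :
    ∃ x ∈ S, cnt S x = j ∧ cnt S (x - 1) = j - 1 := by
  have hm : j ≤ cnt S m := by
    rw [cnt_eq_card S (fun x hx => (hS x hx).2)]; exact hjc
  have hex : ∃ t, j ≤ cnt S t := ⟨m, hm⟩
  classical
  let x := Nat.find hex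
  have hx : j ≤ cnt S x := Nat.find_spec hex
  have hx1 : 1 ≤ x := by
    rcases Nat.eq_zero_or_pos x with h0 | h1
    · exfalso
      have := hx
      rw [h0, cnt_zero S (fun h => by have := (hS 0 h).1; omega)] at this
      omega
    · exact h1
  have hxp : cnt S (x - 1) < j := by
    by_contra h
    push_neg at h
    have := Nat.find_min hex (m := x - 1) (by omega)
    omega
  have hstep : cnt S x ≤ cnt S (x - 1) + 1 := by
    rw [cnt_pred S hx1]; split_ifs <;> omega
  have hcx : cnt S x = j := by omega
  have hcxp : cnt S (x - 1) = j - 1 := by omega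
  refine ⟨x, ?_, hcx, hcxp⟩
  rw [mem_iff_cnt S hx1]
  omega

section pcnt
variable {m : ℕ} (w : Fin m → Bool)

lemma pcnt_zero (b : Bool) : pcnt w b 0 = 0 := by
  simp [pcnt]

lemma pcnt_succ (b : Bool) (i : ℕ) :
    pcnt w b (i + 1) = pcnt w b i + if ltr w (i+1) = b then 1 else 0 := by
  unfold pcnt
  have : Finset.Icc 1 (i+1) = insert (i+1) (Finset.Icc 1 i) := by
    ext x; simp only [Finset.mem_Icc, Finset.mem_insert]; omega
  rw [this, Finset.filter_insert]
  split_ifs with h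
  · rw [Finset.card_insert_of_notMem (by simp)]
  · simp

lemma pcnt_mono (b : Bool) {i i' : ℕ} (h : i ≤ i') : pcnt w b i ≤ pcnt w b i' := by
  apply Finset.card_le_card
  apply Finset.filter_subset_filter
  intro x; simp only [Finset.mem_Icc]; omega

lemma pcnt_le (b : Bool) (i : ℕ) : pcnt w b i ≤ i := by
  calc pcnt w b i ≤ (Finset.Icc 1 i).card := Finset.card_le_card (Finset.filter_subset _ _)
  _ = i := by rw [Nat.card_Icc]; omega

lemma pcnt_add {i : ℕ} (hi : i ≤ m) : pcnt w true i + pcnt w false i = i := by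
  induction i with
  | zero => simp [pcnt_zero]
  | succ j ih =>
    rw [pcnt_succ, pcnt_succ]
    have hih := ih (by omega)
    have : ltr w (j+1) = true ∨ ltr w (j+1) = false := by
      cases ltr w (j+1) <;> simp
    rcases this with h | h <;> rw [h] <;> simp <;> omega

lemma ltr_iff {i : ℕ} (hi : 1 ≤ i) (b : Bool) :
    ltr w i = b ↔ pcnt w b i = pcnt w b (i-1) + 1 := by
  obtain ⟨j, rfl⟩ : ∃ j, i = j + 1 := ⟨i - 1, by omega⟩
  rw [pcnt_succ]
  simp only [Nat.add_sub_cancel]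
  split_ifs with h <;> simp [h]

lemma pcnt_const_of_false {a b : ℕ} (hab : a ≤ b)
    (h : ∀ j, a < j → j ≤ b → ltr w j = false) :
    pcnt w true b = pcnt w true a := by
  induction b with
  | zero =>
    have : a = 0 := by omega
    rw [this]
  | succ c ih =>
    rcases Nat.lt_or_ge a (c+1) with h1 | h1
    · rw [pcnt_succ, ih (by omega) (fun j hj1 hj2 => h j hj1 (by omega)),
        h (c+1) (by omega) le_rfl]
      simp
    · have : a = c + 1 := by omega
      rw [this]
end pcnt

section des
variable {n : ℕ} (w : Fin (2 * n) → Bool)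

lemma mem_Des {i : ℕ} : i ∈ Des w ↔
    1 ≤ i ∧ i ≤ 2 * n - 1 ∧ ltr w i = false ∧ ltr w (i + 1) = true := by
  simp only [Des, Finset.mem_filter, Finset.mem_Icc]
  tauto

lemma des_strict {i i' : ℕ} (hi : i ∈ Des w) (hi' : i' ∈ Des w) (h : i < i') :
    pcnt w false i < pcnt w false i' ∧ pcnt w true i < pcnt w true i' := by
  rw [mem_Des] at hi hi'
  constructor
  · have h1 : pcnt w false i' = pcnt w false (i'-1) + 1 :=
      (ltr_iff w hi'.1 false).1 hi'.2.2.1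
    have h2 : pcnt w false i ≤ pcnt w false (i'-1) := pcnt_mono w false (by omega)
    omega
  · have h1 : pcnt w true (i+1) = pcnt w true i + 1 := by
      have := (ltr_iff w (i := i+1) (by omega) true).1 hi.2.2.2
      simpa using this
    have h2 : pcnt w true (i+1) ≤ pcnt w true i' := pcnt_mono w true (by omega)
    omega

lemma des_injOn_H : Set.InjOn (fun i => pcnt w false i) (Des w) := by
  intro a ha b hb hab
  by_contra hne
  rcases Nat.lt_or_ge a b with h | h
  · have := (des_strict w ha hb h).1; simp only at hab; omega
  · have := (des_strict w hb ha (by omega)).1; simp only at hab; omega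

lemma des_injOn_V : Set.InjOn (fun i => pcnt w true i) (Des w) := by
  intro a ha b hb hab
  by_contra hne
  rcases Nat.lt_or_ge a b with h | h
  · have := (des_strict w ha hb h).2; simp only at hab; omega
  · have := (des_strict w hb ha (by omega)).2; simp only at hab; omega

end des

lemma cnt_image {s : Finset ℕ} {f : ℕ → ℕ} (hf : Set.InjOn f s) (t : ℕ) :
    cnt (s.image f) t = (s.filter (fun i => f i ≤ t)).card := by
  unfold cnt
  rw [Finset.filter_image]
  apply Finset.card_image_of_injOn
  exact hf.mono (by intro x hx; exact (Finset.mem_filter.1 hx).1)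

/-- The valley coordinates of a word. -/
def Xs {n : ℕ} (w : Fin (2 * n) → Bool) : Finset ℕ := (Des w).image (fun i => pcnt w false i)
def Ys {n : ℕ} (w : Fin (2 * n) → Bool) : Finset ℕ := (Des w).image (fun i => pcnt w true i)

section dyck
variable {n : ℕ} {w : Fin (2 * n) → Bool} (hw : IsDyck n w)
include hw

lemma pcnt_false_total : pcnt w false (2 * n) = n := by
  have h1 := pcnt_add w (le_refl (2*n))
  have h2 := hw.1
  omega

lemma des_bounds {i : ℕ} (hi : i ∈ Des w) :
    1 ≤ pcnt w false i ∧ pcnt w false i ≤ pcnt w true i ∧ pcnt w true i ≤ n - 1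
      ∧ 1 ≤ n := by
  rw [mem_Des] at hi
  have hn : 1 ≤ n := by
    rcases Nat.eq_zero_or_pos n with h0 | h1
    · omega
    · exact h1
  have h1 : pcnt w false i = pcnt w false (i-1) + 1 := (ltr_iff w hi.1 false).1 hi.2.2.1
  have h2 : pcnt w false i ≤ pcnt w true i := hw.2 i (by omega)
  have h3 : pcnt w true (i+1) = pcnt w true i + 1 := by
    have := (ltr_iff w (i := i+1) (by omega) true).1 hi.2.2.2
    simpa using this
  have h4 : pcnt w true (i+1) ≤ pcnt w true (2*n) := pcnt_mono w true (by omega)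
  rw [hw.1] at h4
  omega

omit hw in
lemma card_Xs_eq : (Xs w).card = (Des w).card := Finset.card_image_of_injOn (des_injOn_H w)
omit hw in
lemma card_Ys_eq : (Ys w).card = (Des w).card := Finset.card_image_of_injOn (des_injOn_V w)

omit hw in
lemma cnt_Ys (t : ℕ) : cnt (Ys w) t = ((Des w).filter (fun i => pcnt w true i ≤ t)).card :=
  cnt_image (des_injOn_V w) t

omit hw in
lemma cnt_Xs (t : ℕ) : cnt (Xs w) t = ((Des w).filter (fun i => pcnt w false i ≤ t)).card :=
  cnt_image (des_injOn_H w) t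

lemma dom_XY (t : ℕ) : cnt (Ys w) t ≤ cnt (Xs w) t := by
  rw [cnt_Ys, cnt_Xs]
  apply Finset.card_le_card
  intro i hi
  rw [Finset.mem_filter] at hi ⊢
  have := (des_bounds hw hi.1).2.1
  exact ⟨hi.1, by omega⟩

end dyck

/-- The height of the unique Dyck path with valley coordinates `(X, Y)` after `p` steps. -/
def Mf (X Y : Finset ℕ) (n p : ℕ) : ℕ :=
  Nat.findGreatest (fun s => cnt Y (s - 1) ≤ cnt X (p - s)) (min p n)

section Mf
variable {n k : ℕ} {X Y : Finset ℕ}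
  (hX : ∀ x ∈ X, 1 ≤ x ∧ x ≤ n - 1) (hY : ∀ y ∈ Y, 1 ≤ y ∧ y ≤ n - 1)
  (hXc : X.card = k) (hYc : Y.card = k)
  (hdom : ∀ t, cnt Y t ≤ cnt X t)

lemma Mf_le (p : ℕ) : Mf X Y n p ≤ min p n := Nat.findGreatest_le _

lemma Mf_down {p s s' : ℕ} (h : cnt Y (s - 1) ≤ cnt X (p - s)) (h' : s' ≤ s) :
    cnt Y (s' - 1) ≤ cnt X (p - s') :=
  le_trans (cnt_mono Y (by omega)) (le_trans h (cnt_mono X (by omega)))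

include hY in
lemma Mf_spec (p : ℕ) : cnt Y (Mf X Y n p - 1) ≤ cnt X (p - Mf X Y n p) := by
  have h0 : cnt Y (0 - 1) ≤ cnt X (p - 0) := by
    rw [Nat.zero_sub, cnt_zero Y (fun h => by have := (hY 0 h).1; omega)]
    omega
  exact Nat.findGreatest_spec (P := fun s => cnt Y (s - 1) ≤ cnt X (p - s)) (Nat.zero_le _) h0

lemma le_Mf {p s : ℕ} (hs : s ≤ min p n) (h : cnt Y (s - 1) ≤ cnt X (p - s)) :
    s ≤ Mf X Y n p := Nat.le_findGreatest hs h

lemma Mf_not {p s : ℕ} (hs1 : Mf X Y n p < s) (hs : s ≤ min p n) :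
    cnt X (p - s) < cnt Y (s - 1) := by
  have := Nat.findGreatest_is_greatest (P := fun s => cnt Y (s - 1) ≤ cnt X (p - s)) hs1 hs
  omega

lemma Mf_zero : Mf X Y n 0 = 0 := by
  unfold Mf
  simp

include hY in
lemma Mf_step (p : ℕ) :
    Mf X Y n p ≤ Mf X Y n (p+1) ∧ Mf X Y n (p+1) ≤ Mf X Y n p + 1 := by
  constructor
  · apply le_Mf
    · have := Mf_le (X := X) (Y := Y) (n := n) p; omega
    · exact Mf_down (Mf_spec hY p) le_rfl |>.trans (cnt_mono X (by omega))
  · set s := Mf X Y n (p+1) with hs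
    rcases Nat.eq_zero_or_pos s with h0 | h1
    · omega
    have hsle : s ≤ min (p+1) n := Mf_le _
    have hcond : cnt Y (s - 1) ≤ cnt X (p + 1 - s) := Mf_spec hY (p+1)
    have : s - 1 ≤ Mf X Y n p := by
      apply le_Mf
      · omega
      · have h1 : cnt Y (s - 1 - 1) ≤ cnt Y (s - 1) := cnt_mono Y (by omega)
        have h2 : (p : ℕ) - (s - 1) = p + 1 - s := by omega
        rw [h2]
        exact h1.trans hcond
    omega

include hY hdom in
lemma Mf_dyck {p : ℕ} (hp : p ≤ 2 * n) : p ≤ 2 * Mf X Y n p := by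
  have h : p - p / 2 ≤ Mf X Y n p := by
    apply le_Mf
    · omega
    · calc cnt Y (p - p / 2 - 1) ≤ cnt X (p - p / 2 - 1) := hdom _
      _ ≤ cnt X (p - (p - p / 2)) := cnt_mono X (by omega)
  omega

include hX hY hXc hYc in
lemma Mf_total : Mf X Y n (2 * n) = n := by
  have h1 : Mf X Y n (2 * n) ≤ n := by have := Mf_le (X := X) (Y := Y) (n := n) (2*n); omega
  have h2 : n ≤ Mf X Y n (2 * n) := by
    apply le_Mf
    · omega
    · have hYn : cnt Y (n - 1) = k := by
        rw [cnt_eq_card Y (fun y hy => (hY y hy).2)]; exact hYc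
      have hXn : cnt X (2 * n - n) = k := by
        rw [cnt_eq_card X (fun x hx => by have := (hX x hx).2; omega)]; exact hXc
      omega
  omega

end Mf

/-- The Dyck word associated to valley data `(X, Y)`. -/
def Gw (X Y : Finset ℕ) (n : ℕ) : Fin (2 * n) → Bool :=
  fun q => decide (Mf X Y n (q.1 + 1) = Mf X Y n q.1 + 1)

section Gw
variable {n k : ℕ} {X Y : Finset ℕ}
  (hX : ∀ x ∈ X, 1 ≤ x ∧ x ≤ n - 1) (hY : ∀ y ∈ Y, 1 ≤ y ∧ y ≤ n - 1)
  (hXc : X.card = k) (hYc : Y.card = k)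
  (hdom : ∀ t, cnt Y t ≤ cnt X t)

lemma ltr_Gw {p : ℕ} (hp1 : 1 ≤ p) (hp2 : p ≤ 2 * n) :
    ltr (Gw X Y n) p = decide (Mf X Y n p = Mf X Y n (p - 1) + 1) := by
  unfold ltr
  rw [dif_pos ⟨hp1, hp2⟩]
  show decide (Mf X Y n (p - 1 + 1) = Mf X Y n (p - 1) + 1) = _
  rw [show p - 1 + 1 = p from by omega]

include hY in
lemma pcnt_Gw_true {p : ℕ} (hp : p ≤ 2 * n) :
    pcnt (Gw X Y n) true p = Mf X Y n p := by
  induction p with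
  | zero => rw [pcnt_zero, Mf_zero]
  | succ q ih =>
    rw [pcnt_succ, ih (by omega), ltr_Gw (by omega) hp]
    have hstep := Mf_step hY (X := X) (n := n) q
    simp only [Nat.add_sub_cancel]
    by_cases h : Mf X Y n (q+1) = Mf X Y n q + 1
    · rw [if_pos (by simpa using h)]; omega
    · rw [if_neg (by simpa using h)]; omega

include hY in
lemma pcnt_Gw_false {p : ℕ} (hp : p ≤ 2 * n) :
    pcnt (Gw X Y n) false p = p - Mf X Y n p := by
  have h1 := pcnt_add (Gw X Y n) hp
  rw [pcnt_Gw_true hY hp] at h1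
  omega

include hX hY hXc hYc hdom in
lemma isDyck_Gw : IsDyck n (Gw X Y n) := by
  constructor
  · rw [pcnt_Gw_true hY le_rfl, Mf_total hX hY hXc hYc]
  · intro i hi
    rw [pcnt_Gw_true hY hi, pcnt_Gw_false hY hi]
    have := Mf_dyck hY hdom (X := X) hi
    omega

include hX hY in
lemma des_Gw_mem {i : ℕ} (hi : i ∈ Des (Gw X Y n)) :
    (i - Mf X Y n i) ∈ X ∧ Mf X Y n i ∈ Y ∧
      pcnt (Gw X Y n) true i = Mf X Y n i ∧
      pcnt (Gw X Y n) false i = i - Mf X Y n i := by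
  rw [mem_Des] at hi
  obtain ⟨hi1, hi2, hf, ht⟩ := hi
  have hn1 : 1 ≤ n := by omega
  set m := Mf X Y n i with hm
  -- basic step relations
  have hfe : Mf X Y n (i - 1) = m := by
    have h1 := Mf_step hY (X := X) (n := n) (i - 1)
    rw [show i - 1 + 1 = i by omega] at h1
    rw [ltr_Gw hi1 (by omega)] at hf
    simp only [decide_eq_false_iff_not] at hf
    omega
  have hte : Mf X Y n (i + 1) = m + 1 := by
    have h1 := Mf_step hY (X := X) (n := n) i
    rw [ltr_Gw (p := i + 1) (by omega) (by omega)] at ht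
    simp only [Nat.add_sub_cancel, decide_eq_true_eq] at ht
    omega
  have hmlei : m ≤ i - 1 := by
    have := Mf_le (X := X) (Y := Y) (n := n) (i - 1)
    omega
  have hmn : m + 1 ≤ n := by
    have := Mf_le (X := X) (Y := Y) (n := n) (i + 1)
    omega
  -- A : from Mf (i+1) = m+1
  have hA : cnt Y m ≤ cnt X (i - m) := by
    have := Mf_spec hY (X := X) (n := n) (i + 1)
    rw [hte] at this
    simpa only [Nat.add_sub_cancel, show i + 1 - (m + 1) = i - m by omega] using this
  -- B : ¬ pred (i, m+1)
  have hB : cnt X (i - (m + 1)) < cnt Y m := by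
    have := Mf_not (X := X) (Y := Y) (n := n) (p := i) (s := m + 1) (by omega) (by omega)
    simpa using this
  -- D : pred (i-1, m)
  have hD : cnt Y (m - 1) ≤ cnt X (i - 1 - m) := by
    have := Mf_spec hY (X := X) (n := n) (i - 1)
    rwa [hfe] at this
  rw [show i - (m + 1) = i - m - 1 from by omega] at hB
  have hmX : (i - m) ∈ X := by
    rw [mem_iff_cnt X (by omega)]
    omega
  have hm1 : 1 ≤ m := by
    by_contra h
    push_neg at h
    interval_cases m
    rw [cnt_zero Y (fun hmem => by have := (hY 0 hmem).1; omega)] at hB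
    omega
  rw [show i - 1 - m = i - m - 1 from by omega] at hD
  have hmY : m ∈ Y := by
    rw [mem_iff_cnt Y hm1]
    omega
  exact ⟨hmX, hmY, pcnt_Gw_true hY (by omega), pcnt_Gw_false hY (by omega)⟩

end Gw

section Gw2
variable {n k : ℕ} {X Y : Finset ℕ}
  (hX : ∀ x ∈ X, 1 ≤ x ∧ x ≤ n - 1) (hY : ∀ y ∈ Y, 1 ≤ y ∧ y ≤ n - 1)
  (hXc : X.card = k) (hYc : Y.card = k)
  (hdom : ∀ t, cnt Y t ≤ cnt X t)

include hX hY in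
lemma des_Gw_of_rank {j x y : ℕ} (hxX : x ∈ X) (hyY : y ∈ Y)
    (hx1 : cnt X x = j) (hx2 : cnt X (x-1) = j - 1)
    (hy1 : cnt Y y = j) (hy2 : cnt Y (y-1) = j - 1) (hj : 1 ≤ j) :
    (x + y) ∈ Des (Gw X Y n) ∧ Mf X Y n (x + y) = y ∧ Mf X Y n (x + y - 1) = y := by
  obtain ⟨hxa, hxb⟩ := hX x hxX
  obtain ⟨hya, hyb⟩ := hY y hyY
  have hn1 : 1 ≤ n := by omega
  -- Mf (x+y-1) ≥ y
  have h1 : y ≤ Mf X Y n (x + y - 1) := by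
    apply le_Mf
    · omega
    · rw [show x + y - 1 - y = x - 1 from by omega]
      omega
  -- Mf (x+y) ≤ y
  have h2 : Mf X Y n (x + y) ≤ y := by
    by_contra hcon
    push_neg at hcon
    have hs := Mf_spec hY (X := X) (n := n) (x + y)
    have hdn := Mf_down (p := x + y) (s := Mf X Y n (x + y)) (s' := y + 1) hs (by omega)
    rw [show x + y - (y + 1) = x - 1 from by omega] at hdn
    simp only [Nat.add_sub_cancel] at hdn
    omega
  have hstep1 := Mf_step hY (X := X) (n := n) (x + y - 1)
  rw [show x + y - 1 + 1 = x + y from by omega] at hstep1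
  have h3 : Mf X Y n (x + y) = y := by omega
  have h4 : Mf X Y n (x + y - 1) = y := by omega
  -- Mf (x+y+1) = y + 1
  have h5 : y + 1 ≤ Mf X Y n (x + y + 1) := by
    apply le_Mf
    · omega
    · rw [show x + y + 1 - (y + 1) = x from by omega]
      simp only [Nat.add_sub_cancel]
      omega
  have hstep2 := Mf_step hY (X := X) (n := n) (x + y)
  have h6 : Mf X Y n (x + y + 1) = y + 1 := by omega
  refine ⟨?_, h3, h4⟩
  rw [mem_Des]
  refine ⟨by omega, by omega, ?_, ?_⟩
  · rw [ltr_Gw (by omega) (by omega)]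
    simp only [decide_eq_false_iff_not]
    omega
  · rw [ltr_Gw (by omega) (by omega)]
    simp only [Nat.add_sub_cancel, decide_eq_true_eq]
    omega

include hX hY hXc hYc in
lemma Ys_Gw : Ys (Gw X Y n) = Y ∧ Xs (Gw X Y n) = X ∧ (Des (Gw X Y n)).card = k := by
  have hYsub : Ys (Gw X Y n) ⊆ Y := by
    intro y hy
    rw [Ys, Finset.mem_image] at hy
    obtain ⟨i, hi, rfl⟩ := hy
    obtain ⟨_, h2, h3, _⟩ := des_Gw_mem hX hY hi
    rw [h3]; exact h2
  have hXsub : Xs (Gw X Y n) ⊆ X := by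
    intro x hx
    rw [Xs, Finset.mem_image] at hx
    obtain ⟨i, hi, rfl⟩ := hx
    obtain ⟨h1, _, _, h4⟩ := des_Gw_mem hX hY hi
    rw [h4]; exact h1
  have hYsup : Y ⊆ Ys (Gw X Y n) := by
    intro y hy
    have hy1 : 1 ≤ y := (hY y hy).1
    set j := cnt Y y with hj
    have hj1 : 1 ≤ j := by
      rw [hj]
      have := (mem_iff_cnt Y hy1).1 hy
      omega
    have hjk : j ≤ k := by rw [hj, ← hYc]; exact cnt_le_card Y y
    have hy2 : cnt Y (y - 1) = j - 1 := by
      have h1 := (mem_iff_cnt Y hy1).1 hy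
      have h2 := cnt_pred Y hy1
      rw [if_pos hy] at h2
      omega
    obtain ⟨x, hxX, hx1, hx2⟩ := exists_rank X hX hj1 (by omega)
    obtain ⟨hdes, hMf, _⟩ := des_Gw_of_rank hX hY hxX hy hx1 hx2 rfl hy2 hj1
    rw [Ys, Finset.mem_image]
    refine ⟨x + y, hdes, ?_⟩
    rw [pcnt_Gw_true hY (by
      have := (hX x hxX).2
      have := (hY y hy).2
      omega), hMf]
  have hYeq : Ys (Gw X Y n) = Y := Finset.Subset.antisymm hYsub hYsup
  have hcard : (Des (Gw X Y n)).card = k := by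
    rw [← card_Ys_eq (w := Gw X Y n), hYeq, hYc]
  have hXeq : Xs (Gw X Y n) = X :=
    Finset.eq_of_subset_of_card_le hXsub (by rw [card_Xs_eq (w := Gw X Y n), hcard, hXc])
  exact ⟨hYeq, hXeq, hcard⟩

end Gw2

section forward
variable {n : ℕ} {w : Fin (2 * n) → Bool} (hw : IsDyck n w)
include hw

lemma Xs_bounds : ∀ x ∈ Xs w, 1 ≤ x ∧ x ≤ n - 1 := by
  intro x hx
  rw [Xs, Finset.mem_image] at hx
  obtain ⟨i, hi, rfl⟩ := hx
  have := des_bounds hw hi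
  omega

lemma Ys_bounds : ∀ y ∈ Ys w, 1 ≤ y ∧ y ≤ n - 1 := by
  intro y hy
  rw [Ys, Finset.mem_image] at hy
  obtain ⟨i, hi, rfl⟩ := hy
  have := des_bounds hw hi
  omega

lemma height_formula {p : ℕ} (hp : p ≤ 2 * n) :
    Mf (Xs w) (Ys w) n p = pcnt w true p := by
  have hVp : pcnt w true p ≤ n := by
    have := pcnt_mono w true hp
    rw [hw.1] at this; exact this
  have hVle : pcnt w true p ≤ min p n := le_min (pcnt_le w true p) hVp
  have hHp : pcnt w false p = p - pcnt w true p := by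
    have := pcnt_add w hp; omega
  apply le_antisymm
  · by_contra hcon
    push_neg at hcon
    set s := Mf (Xs w) (Ys w) n p with hsdef
    have hsle : s ≤ min p n := Mf_le _
    have hspec : cnt (Ys w) (s - 1) ≤ cnt (Xs w) (p - s) := Mf_spec (Ys_bounds hw) p
    -- construct the extra descent
    have hex : ∃ i, p - s + 1 ≤ pcnt w false i := ⟨p, by omega⟩
    classical
    set q := Nat.find hex with hqdef
    have hq1 : p - s + 1 ≤ pcnt w false q := Nat.find_spec hex
    have hqp : q ≤ p := Nat.find_min' hex (by omega)
    have hqpos : 1 ≤ q := by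
      rcases Nat.eq_zero_or_pos q with h0 | h1
      · exfalso
        have := hq1
        rw [h0, pcnt_zero] at this
        omega
      · exact h1
    have hqm : pcnt w false (q - 1) ≤ p - s := by
      have := Nat.find_min hex (m := q - 1) (by omega)
      omega
    have hqe : pcnt w false q = pcnt w false (q - 1) + 1 := by
      have hstep := pcnt_succ w false (q - 1)
      rw [show q - 1 + 1 = q from by omega] at hstep
      rw [hstep] at hq1 ⊢
      split_ifs with h
      · rfl
      · exfalso
        simp only [if_neg h, Nat.add_zero] at hq1
        omega
    have hltrq : ltr w q = false := (ltr_iff w hqpos false).2 hqe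
    have hVq : pcnt w true q ≤ pcnt w true p := pcnt_mono w true hqp
    have hr : ∃ i, q < i ∧ i ≤ 2 * n ∧ ltr w i = true := by
      by_contra hno
      push_neg at hno
      have : pcnt w true (2 * n) = pcnt w true q := by
        apply pcnt_const_of_false w (by omega)
        intro j hj1 hj2
        exact Bool.eq_false_iff.mpr (hno j hj1 hj2)
      rw [hw.1] at this
      omega
    set r := Nat.find hr with hrdef
    obtain ⟨hrq, hrn, hrt⟩ : q < r ∧ r ≤ 2 * n ∧ ltr w r = true := Nat.find_spec hr
    have hrm1 : ltr w (r - 1) = false := by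
      rcases Nat.lt_or_ge q (r - 1) with h | h
      · have hmin := Nat.find_min hr (m := r - 1) (by omega)
        push_neg at hmin
        exact Bool.eq_false_iff.mpr (hmin h (by omega))
      · have : r - 1 = q := by omega
        rw [this]; exact hltrq
    have hVr : pcnt w true (r - 1) = pcnt w true q := by
      apply pcnt_const_of_false w (by omega)
      intro j hj1 hj2
      have hmin := Nat.find_min hr (m := j) (by omega)
      push_neg at hmin
      exact Bool.eq_false_iff.mpr (hmin hj1 (by omega))
    have hdes : r - 1 ∈ Des w := by
      rw [mem_Des]
      refine ⟨by omega, by omega, hrm1, ?_⟩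
      rw [show r - 1 + 1 = r from by omega]
      exact hrt
    -- the counting contradiction
    have hsetsub : insert (r-1) ((Des w).filter (fun i => pcnt w false i ≤ p - s))
        ⊆ (Des w).filter (fun i => pcnt w true i ≤ s - 1) := by
      intro i hi
      rw [Finset.mem_insert] at hi
      rcases hi with rfl | hi
      · rw [Finset.mem_filter]
        refine ⟨hdes, ?_⟩
        rw [hVr]
        omega
      · rw [Finset.mem_filter] at hi ⊢
        refine ⟨hi.1, ?_⟩
        have hHi : pcnt w false i < pcnt w false p := by omega
        have hip : i < p := by
          by_contra hc
          push_neg at hc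
          have := pcnt_mono w false hc
          omega
        have := pcnt_mono w true (le_of_lt hip)
        omega
    have hnotmem : (r-1) ∉ (Des w).filter (fun i => pcnt w false i ≤ p - s) := by
      rw [Finset.mem_filter]
      rintro ⟨_, hle⟩
      have : pcnt w false q ≤ pcnt w false (r - 1) := pcnt_mono w false (by omega)
      omega
    have hcard := Finset.card_le_card hsetsub
    rw [Finset.card_insert_of_notMem hnotmem] at hcard
    rw [cnt_Ys (w := w) (s - 1), cnt_Xs (w := w) (p - s)] at hspec
    omega
  · apply le_Mf hVle
    rw [cnt_Ys (w := w), cnt_Xs (w := w)]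
    apply Finset.card_le_card
    intro i hi
    rw [Finset.mem_filter] at hi ⊢
    refine ⟨hi.1, ?_⟩
    have hb := des_bounds hw hi.1
    have hic := hi.2
    have hip : i < p := by
      by_contra hc
      push_neg at hc
      have h5 := pcnt_mono w true hc
      omega
    have h6 := pcnt_mono w false (le_of_lt hip)
    omega

lemma Gw_eq : Gw (Xs w) (Ys w) n = w := by
  funext q
  have hq2 : q.1 + 1 ≤ 2 * n := q.2
  have h1 := height_formula hw (p := q.1 + 1) hq2
  have h2 := height_formula hw (p := q.1) (by omega)
  show decide (Mf (Xs w) (Ys w) n (q.1 + 1) = Mf (Xs w) (Ys w) n q.1 + 1) = w q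
  rw [h1, h2]
  have hltr : ltr w (q.1 + 1) = w q := by
    unfold ltr
    rw [dif_pos ⟨by omega, hq2⟩]
    have he : (⟨q.1 + 1 - 1, by omega⟩ : Fin (2 * n)) = q := Fin.ext (by simp)
    rw [he]
  have hiff := ltr_iff w (i := q.1 + 1) (by omega) true
  simp only [Nat.add_sub_cancel] at hiff
  rw [hltr] at hiff
  cases hwq : w q with
  | true => simp only [decide_eq_true_eq]; exact hiff.1 hwq
  | false =>
    simp only [decide_eq_false_iff_not]
    intro hcc
    have := hiff.2 hcc
    rw [hwq] at this
    exact Bool.noConfusion this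

end forward

/-! ### Part 2 : counting the pairs -/

def swp (t : ℕ) (S T : Finset ℕ) : Finset ℕ :=
  S.filter (· ≤ t) ∪ T.filter (fun x => ¬ x ≤ t)

lemma swp_filter_le (t : ℕ) (S T : Finset ℕ) :
    (swp t S T).filter (· ≤ t) = S.filter (· ≤ t) := by
  unfold swp
  rw [Finset.filter_union]
  ext x
  simp only [Finset.mem_union, Finset.mem_filter]
  constructor
  · rintro (⟨⟨h1, h2⟩, h3⟩ | ⟨⟨h1, h2⟩, h3⟩)
    · exact ⟨h1, h3⟩
    · omega
  · rintro ⟨h1, h2⟩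
    exact Or.inl ⟨⟨h1, h2⟩, h2⟩

lemma swp_filter_gt (t : ℕ) (S T : Finset ℕ) :
    (swp t S T).filter (fun x => ¬ x ≤ t) = T.filter (fun x => ¬ x ≤ t) := by
  unfold swp
  rw [Finset.filter_union]
  ext x
  simp only [Finset.mem_union, Finset.mem_filter]
  constructor
  · rintro (⟨⟨h1, h2⟩, h3⟩ | ⟨⟨h1, h2⟩, h3⟩)
    · omega
    · exact ⟨h1, h3⟩
  · rintro ⟨h1, h2⟩
    exact Or.inr ⟨⟨h1, h2⟩, h2⟩

lemma swp_swp (t : ℕ) (S T : Finset ℕ) : swp t (swp t S T) (swp t T S) = S := by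
  show (swp t S T).filter (· ≤ t) ∪ (swp t T S).filter (fun x => ¬ x ≤ t) = S
  rw [swp_filter_le, swp_filter_gt]
  exact Finset.filter_union_filter_not_eq _ S

lemma swp_subset {t : ℕ} {S T U : Finset ℕ} (hS : S ⊆ U) (hT : T ⊆ U) : swp t S T ⊆ U := by
  unfold swp
  intro x hx
  rw [Finset.mem_union] at hx
  rcases hx with hx | hx
  · exact hS (Finset.mem_filter.1 hx).1
  · exact hT (Finset.mem_filter.1 hx).1

lemma card_swp (t : ℕ) (S T : Finset ℕ) :
    (swp t S T).card + cnt T t = cnt S t + T.card := by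
  unfold swp
  rw [Finset.card_union_of_disjoint]
  · have h1 : (T.filter (fun x => ¬ x ≤ t)).card + cnt T t = T.card := by
      rw [Nat.add_comm]
      exact Finset.card_filter_add_card_filter_not _
    unfold cnt at *
    omega
  · rw [Finset.disjoint_left]
    intro x hx hx2
    rw [Finset.mem_filter] at hx hx2
    exact hx2.2 hx.2

lemma cnt_union_disj {S T : Finset ℕ} (h : Disjoint S T) (u : ℕ) :
    cnt (S ∪ T) u = cnt S u + cnt T u := by
  unfold cnt
  rw [Finset.filter_union, Finset.card_union_of_disjoint]
  exact Finset.disjoint_filter_filter h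

lemma cnt_filter_le {u t : ℕ} (S : Finset ℕ) (h : u ≤ t) :
    cnt (S.filter (· ≤ t)) u = cnt S u := by
  unfold cnt
  congr 1
  ext x
  simp only [Finset.mem_filter]
  constructor
  · rintro ⟨⟨h1, h2⟩, h3⟩; exact ⟨h1, h3⟩
  · rintro ⟨h1, h2⟩; exact ⟨⟨h1, by omega⟩, h2⟩

lemma cnt_filter_gt_le {u t : ℕ} (S : Finset ℕ) (h : u ≤ t) :
    cnt (S.filter (fun x => ¬ x ≤ t)) u = 0 := by
  unfold cnt
  rw [Finset.card_eq_zero]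
  ext x
  simp only [Finset.mem_filter, Finset.notMem_empty, iff_false]
  rintro ⟨⟨h1, h2⟩, h3⟩
  omega

lemma cnt_swp_le {u t : ℕ} (S T : Finset ℕ) (h : u ≤ t) :
    cnt (swp t S T) u = cnt S u := by
  unfold swp
  rw [cnt_union_disj, cnt_filter_le S h, cnt_filter_gt_le T h]
  · omega
  · rw [Finset.disjoint_left]
    intro x hx hx2
    rw [Finset.mem_filter] at hx hx2
    exact hx2.2 hx.2

lemma cnt_filter_le_ge {u t : ℕ} (S : Finset ℕ) (h : t ≤ u) :
    cnt (S.filter (· ≤ t)) u = cnt S t := by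
  unfold cnt
  congr 1
  ext x
  simp only [Finset.mem_filter]
  constructor
  · rintro ⟨⟨h1, h2⟩, h3⟩; exact ⟨h1, h2⟩
  · rintro ⟨h1, h2⟩; exact ⟨⟨h1, h2⟩, by omega⟩

lemma cnt_filter_gt_ge {u t : ℕ} (S : Finset ℕ) (h : t ≤ u) :
    cnt (S.filter (fun x => ¬ x ≤ t)) u + cnt S t = cnt S u := by
  unfold cnt
  rw [← Finset.card_union_of_disjoint]
  · congr 1
    ext x
    simp only [Finset.mem_union, Finset.mem_filter]
    constructor
    · rintro (⟨⟨h1, h2⟩, h3⟩ | ⟨h1, h2⟩)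
      · exact ⟨h1, h3⟩
      · exact ⟨h1, by omega⟩
    · rintro ⟨h1, h2⟩
      by_cases hx : x ≤ t
      · exact Or.inr ⟨h1, hx⟩
      · exact Or.inl ⟨⟨h1, hx⟩, h2⟩
  · rw [Finset.disjoint_left]
    intro x hx hx2
    simp only [Finset.mem_filter] at hx hx2
    exact hx.1.2 hx2.2

lemma cnt_swp_ge {u t : ℕ} (S T : Finset ℕ) (h : t ≤ u) :
    cnt (swp t S T) u = cnt S t + (cnt T u - cnt T t) := by
  unfold swp
  rw [cnt_union_disj, cnt_filter_le_ge S h]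
  · have := cnt_filter_gt_ge T h
    omega
  · rw [Finset.disjoint_left]
    intro x hx hx2
    rw [Finset.mem_filter] at hx hx2
    exact hx2.2 hx.2

/-- first crossing time -/
noncomputable def fv (X Y : Finset ℕ) : ℕ := sInf {t | cnt X t < cnt Y t}

lemma cross {n : ℕ} {A B : Finset ℕ} (hA : A ⊆ Finset.Icc 1 (n-1)) (hB : B ⊆ Finset.Icc 1 (n-1))
    (hne : {t | cnt B t < cnt A t}.Nonempty) :
    cnt A (fv B A) = cnt B (fv B A) + 1 ∧ (fv B A) ∈ A ∧ (fv B A) ∉ B ∧ 1 ≤ fv B A ∧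
      (∀ u < fv B A, cnt A u ≤ cnt B u) := by
  set t0 := fv B A with ht0
  have h0 : cnt B t0 < cnt A t0 := Nat.sInf_mem hne
  have hmin : ∀ u < t0, cnt A u ≤ cnt B u := by
    intro u hu
    have := Nat.notMem_of_lt_sInf (s := {t | cnt B t < cnt A t}) hu
    simp only [Set.mem_setOf_eq, not_lt] at this
    exact this
  have ht1 : 1 ≤ t0 := by
    by_contra h
    push_neg at h
    interval_cases t0
    rw [cnt_zero A (fun hmem => by have := Finset.mem_Icc.1 (hA hmem); omega),
      cnt_zero B (fun hmem => by have := Finset.mem_Icc.1 (hB hmem); omega)] at h0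
    omega
  have hminp := hmin (t0 - 1) (by omega)
  have hA' := cnt_pred A ht1
  have hB' := cnt_pred B ht1
  by_cases hta : t0 ∈ A <;> by_cases htb : t0 ∈ B <;>
    simp only [if_pos, if_neg, hta, htb, if_true, if_false] at hA' hB' <;>
    first
      | (exact ⟨by omega, hta, htb, ht1, hmin⟩)
      | (exfalso; omega)

/-- the "good" pairs -/
def Pset (n k : ℕ) : Finset (Finset ℕ × Finset ℕ) :=
  (((Finset.Icc 1 (n-1)).powersetCard k) ×ˢ ((Finset.Icc 1 (n-1)).powersetCard k)).filter
    (fun q => ∀ t ∈ Finset.range n, cnt q.2 t ≤ cnt q.1 t)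

def BadSet (n k : ℕ) : Finset (Finset ℕ × Finset ℕ) :=
  (((Finset.Icc 1 (n-1)).powersetCard k) ×ˢ ((Finset.Icc 1 (n-1)).powersetCard k)).filter
    (fun q => ¬ ∀ t ∈ Finset.range n, cnt q.2 t ≤ cnt q.1 t)

lemma mem_BadSet {n k : ℕ} {q : Finset ℕ × Finset ℕ} :
    q ∈ BadSet n k ↔ q.1 ⊆ Finset.Icc 1 (n-1) ∧ q.1.card = k ∧
      q.2 ⊆ Finset.Icc 1 (n-1) ∧ q.2.card = k ∧ ∃ t < n, cnt q.1 t < cnt q.2 t := by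
  unfold BadSet
  rw [Finset.mem_filter, Finset.mem_product, Finset.mem_powersetCard, Finset.mem_powersetCard]
  push_neg
  simp only [Finset.mem_range]
  tauto

lemma card_BadSet {n k : ℕ} (hn : 1 ≤ n) (hk : 1 ≤ k) :
    (BadSet n k).card =
      (((Finset.Icc 1 (n-1)).powersetCard (k+1)) ×ˢ
        ((Finset.Icc 1 (n-1)).powersetCard (k-1))).card := by
  apply Finset.card_bij'
    (i := fun q _ => (swp (fv q.1 q.2) q.2 q.1, swp (fv q.1 q.2) q.1 q.2))
    (j := fun q _ => (swp (fv q.2 q.1) q.2 q.1, swp (fv q.2 q.1) q.1 q.2))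
  · -- maps into the product
    intro q hq
    rw [mem_BadSet] at hq
    obtain ⟨hX, hXc, hY, hYc, t, htn, hviol⟩ := hq
    have hne : {u | cnt q.1 u < cnt q.2 u}.Nonempty := ⟨t, hviol⟩
    obtain ⟨hc1, _, _, _, _⟩ := cross hY hX hne
    rw [Finset.mem_product]
    dsimp only
    rw [Finset.mem_powersetCard, Finset.mem_powersetCard]
    have hle1 : cnt q.1 (fv q.1 q.2) ≤ k := hXc ▸ cnt_le_card q.1 _
    have hle2 : cnt q.2 (fv q.1 q.2) ≤ k := hYc ▸ cnt_le_card q.2 _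
    have hcard1 := card_swp (fv q.1 q.2) q.2 q.1
    have hcard2 := card_swp (fv q.1 q.2) q.1 q.2
    exact ⟨⟨swp_subset hY hX, by omega⟩, ⟨swp_subset hX hY, by omega⟩⟩
  · -- maps back into BadSet
    intro q hq
    rw [Finset.mem_product, Finset.mem_powersetCard, Finset.mem_powersetCard] at hq
    obtain ⟨⟨hA, hAc⟩, ⟨hB, hBc⟩⟩ := hq
    have hwit : cnt q.2 (n-1) < cnt q.1 (n-1) := by
      rw [cnt_eq_card q.1 (fun x hx => (Finset.mem_Icc.1 (hA hx)).2),
        cnt_eq_card q.2 (fun x hx => (Finset.mem_Icc.1 (hB hx)).2), hAc, hBc]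
      omega
    have hne : {u | cnt q.2 u < cnt q.1 u}.Nonempty := ⟨n-1, hwit⟩
    obtain ⟨hc1, _, _, _, _⟩ := cross hA hB hne
    have htle : fv q.2 q.1 ≤ n - 1 := Nat.sInf_le hwit
    rw [mem_BadSet]
    dsimp only
    have hle1 : cnt q.1 (fv q.2 q.1) ≤ k + 1 := hAc ▸ cnt_le_card q.1 _
    have hle2 : cnt q.2 (fv q.2 q.1) ≤ k - 1 := hBc ▸ cnt_le_card q.2 _
    have hcard1 := card_swp (fv q.2 q.1) q.2 q.1
    have hcard2 := card_swp (fv q.2 q.1) q.1 q.2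
    refine ⟨swp_subset hB hA, by omega, swp_subset hA hB, by omega, fv q.2 q.1, by omega, ?_⟩
    rw [cnt_swp_le q.2 q.1 le_rfl, cnt_swp_le q.1 q.2 le_rfl]
    omega
  · -- left inverse
    intro q hq
    rw [mem_BadSet] at hq
    obtain ⟨hX, hXc, hY, hYc, t, htn, hviol⟩ := hq
    have hne : {u | cnt q.1 u < cnt q.2 u}.Nonempty := ⟨t, hviol⟩
    set t0 := fv q.1 q.2 with ht0
    have h0 : cnt q.1 t0 < cnt q.2 t0 := Nat.sInf_mem hne
    have hmin : ∀ u < t0, ¬ (cnt q.1 u < cnt q.2 u) := by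
      intro u hu
      exact Nat.notMem_of_lt_sInf (s := {u | cnt q.1 u < cnt q.2 u}) hu
    have hfv : fv (swp t0 q.1 q.2) (swp t0 q.2 q.1) = t0 := by
      apply le_antisymm
      · apply Nat.sInf_le
        show cnt (swp t0 q.1 q.2) t0 < cnt (swp t0 q.2 q.1) t0
        rw [cnt_swp_le q.1 q.2 le_rfl, cnt_swp_le q.2 q.1 le_rfl]
        exact h0
      · apply le_csInf ⟨t0, by
          show cnt (swp t0 q.1 q.2) t0 < cnt (swp t0 q.2 q.1) t0
          rw [cnt_swp_le q.1 q.2 le_rfl, cnt_swp_le q.2 q.1 le_rfl]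
          exact h0⟩
        intro u hu
        by_contra hc
        push_neg at hc
        have hu' : cnt (swp t0 q.1 q.2) u < cnt (swp t0 q.2 q.1) u := hu
        rw [cnt_swp_le q.1 q.2 (by omega), cnt_swp_le q.2 q.1 (by omega)] at hu'
        exact hmin u hc hu'
    have := swp_swp t0 q.1 q.2
    have := swp_swp t0 q.2 q.1
    ext <;> simp only [hfv] <;> simp_all
  · -- right inverse
    intro q hq
    rw [Finset.mem_product, Finset.mem_powersetCard, Finset.mem_powersetCard] at hq
    obtain ⟨⟨hA, hAc⟩, ⟨hB, hBc⟩⟩ := hq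
    have hwit : cnt q.2 (n-1) < cnt q.1 (n-1) := by
      rw [cnt_eq_card q.1 (fun x hx => (Finset.mem_Icc.1 (hA hx)).2),
        cnt_eq_card q.2 (fun x hx => (Finset.mem_Icc.1 (hB hx)).2), hAc, hBc]
      omega
    have hne : {u | cnt q.2 u < cnt q.1 u}.Nonempty := ⟨n-1, hwit⟩
    set t0 := fv q.2 q.1 with ht0
    have h0 : cnt q.2 t0 < cnt q.1 t0 := Nat.sInf_mem hne
    have hmin : ∀ u < t0, ¬ (cnt q.2 u < cnt q.1 u) := by
      intro u hu
      exact Nat.notMem_of_lt_sInf (s := {u | cnt q.2 u < cnt q.1 u}) hu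
    have hfv : fv (swp t0 q.2 q.1) (swp t0 q.1 q.2) = t0 := by
      apply le_antisymm
      · apply Nat.sInf_le
        show cnt (swp t0 q.2 q.1) t0 < cnt (swp t0 q.1 q.2) t0
        rw [cnt_swp_le q.2 q.1 le_rfl, cnt_swp_le q.1 q.2 le_rfl]
        exact h0
      · apply le_csInf ⟨t0, by
          show cnt (swp t0 q.2 q.1) t0 < cnt (swp t0 q.1 q.2) t0
          rw [cnt_swp_le q.2 q.1 le_rfl, cnt_swp_le q.1 q.2 le_rfl]
          exact h0⟩
        intro u hu
        by_contra hc
        push_neg at hc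
        have hu' : cnt (swp t0 q.2 q.1) u < cnt (swp t0 q.1 q.2) u := hu
        rw [cnt_swp_le q.2 q.1 (by omega), cnt_swp_le q.1 q.2 (by omega)] at hu'
        exact hmin u hc hu'
    have := swp_swp t0 q.1 q.2
    have := swp_swp t0 q.2 q.1
    ext <;> simp only [hfv] <;> simp_all

lemma mem_Pset {n k : ℕ} (hn : 1 ≤ n) {q : Finset ℕ × Finset ℕ} :
    q ∈ Pset n k ↔ q.1 ⊆ Finset.Icc 1 (n-1) ∧ q.1.card = k ∧
      q.2 ⊆ Finset.Icc 1 (n-1) ∧ q.2.card = k ∧ ∀ t, cnt q.2 t ≤ cnt q.1 t := by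
  unfold Pset
  rw [Finset.mem_filter, Finset.mem_product, Finset.mem_powersetCard, Finset.mem_powersetCard]
  constructor
  · rintro ⟨⟨⟨hX, hXc⟩, hY, hYc⟩, hdom⟩
    refine ⟨hX, hXc, hY, hYc, fun t => ?_⟩
    rcases Nat.lt_or_ge t n with h | h
    · exact hdom t (Finset.mem_range.2 h)
    · rw [cnt_eq_card q.1 (fun x hx => by have := Finset.mem_Icc.1 (hX hx); omega),
        cnt_eq_card q.2 (fun x hx => by have := Finset.mem_Icc.1 (hY hx); omega), hXc, hYc]
  · rintro ⟨hX, hXc, hY, hYc, hdom⟩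
    exact ⟨⟨⟨hX, hXc⟩, hY, hYc⟩, fun t _ => hdom t⟩

open Classical in
lemma count_dyck_eq_pset {n k : ℕ} (hn : 1 ≤ n) :
    Nat.card {w : Fin (2 * n) → Bool // IsDyck n w ∧ (Des w).card = k}
      = (Pset n k).card := by
  classical
  rw [Nat.card_eq_fintype_card, Fintype.card_subtype]
  apply Finset.card_bij' (i := fun w _ => (Xs w, Ys w)) (j := fun q _ => Gw q.1 q.2 n)
  · intro w hw
    rw [Finset.mem_filter] at hw
    obtain ⟨_, hdy, hdc⟩ := hw
    rw [mem_Pset hn]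
    dsimp only
    refine ⟨?_, ?_, ?_, ?_, ?_⟩
    · intro x hx; rw [Finset.mem_Icc]; exact Xs_bounds hdy x hx
    · rw [card_Xs_eq, hdc]
    · intro y hy; rw [Finset.mem_Icc]; exact Ys_bounds hdy y hy
    · rw [card_Ys_eq, hdc]
    · exact dom_XY hdy
  · intro q hq
    rw [mem_Pset hn] at hq
    obtain ⟨hX, hXc, hY, hYc, hdom⟩ := hq
    have hX' : ∀ x ∈ q.1, 1 ≤ x ∧ x ≤ n - 1 := fun x hx => Finset.mem_Icc.1 (hX hx)
    have hY' : ∀ y ∈ q.2, 1 ≤ y ∧ y ≤ n - 1 := fun y hy => Finset.mem_Icc.1 (hY hy)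
    rw [Finset.mem_filter]
    refine ⟨Finset.mem_univ _, isDyck_Gw hX' hY' hXc hYc hdom, ?_⟩
    exact (Ys_Gw hX' hY' hXc hYc).2.2
  · intro w hw
    rw [Finset.mem_filter] at hw
    exact Gw_eq hw.2.1
  · intro q hq
    rw [mem_Pset hn] at hq
    obtain ⟨hX, hXc, hY, hYc, hdom⟩ := hq
    have hX' : ∀ x ∈ q.1, 1 ≤ x ∧ x ≤ n - 1 := fun x hx => Finset.mem_Icc.1 (hX hx)
    have hY' : ∀ y ∈ q.2, 1 ≤ y ∧ y ≤ n - 1 := fun y hy => Finset.mem_Icc.1 (hY hy)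
    obtain ⟨h1, h2, _⟩ := Ys_Gw hX' hY' hXc hYc
    ext : 1 <;> simp only [h1, h2]

lemma card_pset_add_bad {n k : ℕ} :
    (Pset n k).card + (BadSet n k).card = (n-1).choose k * (n-1).choose k := by
  unfold Pset BadSet
  rw [Finset.card_filter_add_card_filter_not, Finset.card_product,
    Finset.card_powersetCard, Nat.card_Icc]
  norm_num

lemma card_prod_shift {n k : ℕ} :
    (((Finset.Icc 1 (n-1)).powersetCard (k+1)) ×ˢ
        ((Finset.Icc 1 (n-1)).powersetCard (k-1))).card
      = (n-1).choose (k+1) * (n-1).choose (k-1) := by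
  rw [Finset.card_product, Finset.card_powersetCard, Finset.card_powersetCard, Nat.card_Icc]
  norm_num

lemma badset_zero {n : ℕ} : BadSet n 0 = ∅ := by
  ext q
  simp only [Finset.notMem_empty, iff_false]
  intro hq
  rw [mem_BadSet] at hq
  obtain ⟨_, _, _, hYc, t, _, hviol⟩ := hq
  have := cnt_le_card q.2 t
  omega

lemma narayana_identity {n k : ℕ} (hn : 1 ≤ n) (hk : 1 ≤ k) :
    n * ((n-1).choose k * (n-1).choose k) =
      n.choose k * n.choose (k+1) + n * ((n-1).choose (k+1) * (n-1).choose (k-1)) := by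
  rcases Nat.lt_or_ge (n-1) k with h | h
  · -- degenerate case k ≥ n
    rw [Nat.choose_eq_zero_of_lt h, Nat.choose_eq_zero_of_lt (by omega : n < k + 1),
      Nat.choose_eq_zero_of_lt (by omega : n - 1 < k + 1)]
    ring
  · obtain ⟨j, rfl⟩ : ∃ j, k = j + 1 := ⟨k - 1, by omega⟩
    obtain ⟨e, rfl⟩ : ∃ e, n = j + e + 2 := ⟨n - j - 2, by omega⟩
    simp only [show j + e + 2 - 1 = j + e + 1 from by omega, Nat.add_sub_cancel]
    have h1 := Nat.choose_succ_right_eq (j+e+1) j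
    rw [show (j+e+1) - j = e + 1 from by omega] at h1
    have h2 := Nat.choose_succ_right_eq (j+e+1) (j+1)
    rw [show (j+e+1) - (j+1) = e from by omega] at h2
    have h3 : (j+e+2).choose (j+1) = (j+e+1).choose j + (j+e+1).choose (j+1) :=
      Nat.choose_succ_succ (j+e+1) j
    have h4 : (j+e+2).choose (j+1+1) = (j+e+1).choose (j+1) + (j+e+1).choose (j+1+1) :=
      Nat.choose_succ_succ (j+e+1) (j+1)
    rw [h3, h4]
    set a := (j+e+1).choose j with ha
    set b := (j+e+1).choose (j+1) with hb
    set c := (j+e+1).choose (j+1+1) with hc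
    -- pass to ℚ
    qify at h1 h2 ⊢
    have he1 : ((e:ℚ) + 1) ≠ 0 := by positivity
    have hj2 : ((j:ℚ) + 2) ≠ 0 := by positivity
    have hA : (a:ℚ) = b * (j+1) / (e+1) := by
      rw [eq_div_iff he1]
      push_cast at h1 ⊢
      linarith
    have hC : (c:ℚ) = b * e / (j+2) := by
      rw [eq_div_iff hj2]
      push_cast at h2 ⊢
      linarith
    rw [hA, hC]
    field_simp
    ring

/-- The number of Dyck paths of length `2n` with exactly `k` descents (valleys)
is the Narayana number `N(n,k) = (1/n) C(n,k) C(n,k+1)` (stated multiplied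
through by `n`). -/
theorem narayana_count_descents (n k : ℕ) (hn : 0 < n) :
    n * Nat.card {w : Fin (2 * n) → Bool // IsDyck n w ∧ (Des w).card = k} =
      n.choose k * n.choose (k + 1) := by
  rw [count_dyck_eq_pset hn]
  rcases Nat.eq_zero_or_pos k with rfl | hk
  · have h5 := card_pset_add_bad (n := n) (k := 0)
    rw [badset_zero] at h5
    simp only [Finset.card_empty, Nat.add_zero, Nat.choose_zero_right, Nat.mul_one] at h5
    rw [h5, Nat.choose_zero_right, Nat.choose_one_right]
    ring
  · have h5 := card_pset_add_bad (n := n) (k := k)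
    have h6 := card_BadSet hn hk
    rw [card_prod_shift] at h6
    have h7 := narayana_identity hn hk
    have e1 : n * (Pset n k).card + n * (BadSet n k).card
        = n * ((n-1).choose k * (n-1).choose k) := by
      rw [← Nat.mul_add, h5]
    have e2 : n * (BadSet n k).card = n * ((n-1).choose (k+1) * (n-1).choose (k-1)) := by
      rw [h6]
    omega
end

section
/- The number of Dyck paths of length 2n with exactly k high peaks equals the number of Dyck paths of length 2n with exactly k descents (valleys); i.e., high peaks are a Narayana statistic. -/
/-!
Cutting a Dyck path at its first return to the diagonal writes it uniquely as `v A h B` with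
`A`, `B` Dyck paths, so Dyck paths are binary trees (`DyckWord.equivTree`). Writing `val`, `pk`
and `hp` for the numbers of valleys, peaks and high peaks,
`val (v A h B) = val A + val B + [B ≠ ∅]`, `pk A = val A + [A ≠ ∅]` and
`hp (v A h B) = pk A + hp B`. Hence the bijection `φ (v A h B) = v φ(B) h A` carries high peaks to
valleys: `val (v φ(B) h A) = hp B + val A + [A ≠ ∅] = hp B + pk A`.
-/

open Finset

/-- The set of positions of high peaks of `w`: `i` with `w_i = v`, `w_{i+1} = h`
such that the peak vertex lies strictly above the diagonal (the path does not
return to the diagonal after the `h` step). -/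
def HP {n : ℕ} (w : Fin (2 * n) → Bool) : Finset ℕ :=
  (Finset.Icc 1 (2 * n - 1)).filter fun i =>
    ltr w i = true ∧ ltr w (i + 1) = false ∧ pcnt w false i + 2 ≤ pcnt w true i

namespace List

variable {α : Type*}

open Classical in
noncomputable def countSplits (Q : List α → List α → Prop) (l : List α) : ℕ :=
  #{i ∈ Finset.range l.length | Q (l.take i) (l.drop i)}

section countSplits

variable (Q : List α → List α → Prop)

@[simp]
lemma countSplits_nil : countSplits Q [] = 0 := by
  simp [countSplits]

open Classical in
lemma countSplits_cons (a : α) (l : List α) :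
    countSplits Q (a :: l) =
      (if Q [] (a :: l) then 1 else 0) + countSplits (fun p s => Q (a :: p) s) l := by
  simp only [countSplits, card_filter, length_cons, Finset.sum_range_succ', take_succ_cons,
    drop_succ_cons, take_zero, drop_zero]
  rw [add_comm]

lemma countSplits_append (l₁ l₂ : List α) :
    countSplits Q (l₁ ++ l₂) =
      countSplits (fun p s => Q p (s ++ l₂)) l₁ +
        countSplits (fun p s => Q (l₁ ++ p) s) l₂ := by
  induction l₁ generalizing Q with
  | nil => simp
  | cons a l₁ ih => simp only [cons_append, countSplits_cons, ih]; ring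

open Classical in
lemma countSplits_cons_append_cons (x y : α) (l₁ l₂ : List α) :
    countSplits Q (x :: (l₁ ++ y :: l₂)) =
      (if Q [] (x :: (l₁ ++ y :: l₂)) then 1 else 0) +
      countSplits (fun p s => Q (x :: p) (s ++ y :: l₂)) l₁ +
      (if Q (x :: l₁) (y :: l₂) then 1 else 0) +
      countSplits (fun p s => Q (x :: (l₁ ++ y :: p)) s) l₂ := by
  simp only [countSplits_cons, countSplits_append, append_nil]
  ring

variable {Q} {l : List α}

lemma countSplits_congr {Q' : List α → List α → Prop}
    (h : ∀ i < l.length, Q (l.take i) (l.drop i) ↔ Q' (l.take i) (l.drop i)) :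
    countSplits Q l = countSplits Q' l := by
  classical
  unfold countSplits
  congr 1
  exact Finset.filter_congr fun i hi => h i (Finset.mem_range.mp hi)

lemma countSplits_eq_card_filter_Icc {m : ℕ} {P : ℕ → Prop} [DecidablePred P]
    (hl : l.length = m) (h : ∀ j < m, Q (l.take j) (l.drop j) ↔ j + 1 < m ∧ P (j + 1)) :
    l.countSplits Q = #{i ∈ Icc 1 (m - 1) | P i} := by
  subst hl
  refine card_nbij' (· + 1) (· - 1) (fun j hj => ?_) (fun i hi => ?_) (fun j _ => by simp)
    (fun i hi => ?_)
  · simp only [coe_filter, Finset.mem_range, Set.mem_ofPred_eq, mem_Icc] at hj ⊢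
    have hP := (h j hj.1).mp hj.2
    exact ⟨by omega, hP.2⟩
  · simp only [coe_filter, Finset.mem_range, Set.mem_ofPred_eq, mem_Icc] at hi ⊢
    refine ⟨by omega, (h _ (by omega)).mpr ?_⟩
    rw [Nat.sub_add_cancel hi.1.1]
    exact ⟨by omega, hi.2⟩
  · simp only [coe_filter, Set.mem_ofPred_eq, mem_Icc] at hi
    exact Nat.sub_add_cancel hi.1.1

end countSplits

lemma pair_prefix_drop_iff (l : List α) (j : ℕ) (x y : α) :
    [x, y] <+: l.drop j ↔ l[j]? = some x ∧ l[j + 1]? = some y := by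
  induction l generalizing j with
  | nil => simp
  | cons a l ih =>
    cases j with
    | zero => cases l <;> simp [cons_prefix_cons, eq_comm]
    | succ j => simp [ih]

lemma count_U_add_count_D (l : List DyckStep) :
    l.count DyckStep.U + l.count DyckStep.D = l.length := by
  induction l with
  | nil => rfl
  | cons x l ih => cases x <;> simp <;> omega

end List

namespace BinaryTree

variable {α : Type*}

def twist : BinaryTree α → BinaryTree α
  | nil => nil
  | node a l r => node a r.twist l

def untwist : BinaryTree α → BinaryTree α
  | nil => nil
  | node a l r => node a r l.untwist

@[simp]
lemma untwist_twist (t : BinaryTree α) : t.twist.untwist = t := by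
  induction t with
  | nil => rfl
  | node a l r _ ihr => simp [twist, untwist, ihr]

@[simp]
lemma twist_untwist (t : BinaryTree α) : t.untwist.twist = t := by
  induction t with
  | nil => rfl
  | node a l r ihl _ => simp [twist, untwist, ihl]

@[simp]
lemma numNodes_twist (t : BinaryTree α) : t.twist.numNodes = t.numNodes := by
  induction t with
  | nil => rfl
  | node a l r _ ihr => simp only [twist, numNodes, ihr]; omega

@[simps]
def twistEquiv : BinaryTree α ≃ BinaryTree α where
  toFun := twist
  invFun := untwist
  left_inv := untwist_twist
  right_inv := twist_untwist

end BinaryTree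

namespace DyckWord

open DyckStep List

noncomputable def valleys (p : DyckWord) : ℕ := p.toList.countSplits fun _ s => [D, U] <+: s

noncomputable def peaks (p : DyckWord) : ℕ := p.toList.countSplits fun _ s => [U, D] <+: s

/-- A peak is high iff its up step starts strictly above the diagonal. -/
noncomputable def highPeaks (p : DyckWord) : ℕ :=
  p.toList.countSplits fun a s => [U, D] <+: s ∧ a.count D < a.count U

@[simp]
lemma toList_zero : (0 : DyckWord).toList = [] := rfl

lemma toList_nest_add (p q : DyckWord) :
    (p.nest + q).toList = U :: (p.toList ++ D :: q.toList) := by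
  show (U :: (p.toList ++ [D])) ++ q.toList = _
  simp

lemma nest_add_ne_zero (p q : DyckWord) : p.nest + q ≠ 0 := by
  simp

lemma eq_zero_or_exists_toList_eq_U_cons (p : DyckWord) : p = 0 ∨ ∃ l, p.toList = U :: l := by
  refine or_iff_not_imp_left.mpr fun hp => ?_
  obtain ⟨a, l, hal⟩ := exists_cons_of_ne_nil (toList_ne_nil.mpr hp)
  have ha : a = U := by simpa [hal] using p.head_eq_U (toList_ne_nil.mpr hp)
  exact ⟨l, ha ▸ hal⟩

/-- Appending a `D` only matters at the last step of `p`, which is itself a `D`. -/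
lemma pair_prefix_drop_append_D_iff {x y : DyckStep} (hxy : [x, y] ≠ [D, D]) (p : DyckWord)
    {i : ℕ} (hi : i < p.toList.length) (t : List DyckStep) :
    [x, y] <+: p.toList.drop i ++ D :: t ↔ [x, y] <+: p.toList.drop i := by
  rcases Nat.lt_or_ge (i + 1) p.toList.length with hi' | hi'
  · exact isPrefix_append_of_length (by simp; omega)
  · have hp : p.toList ≠ [] := ne_nil_of_length_pos (by omega)
    rw [show i = p.toList.length - 1 by omega, drop_length_sub_one hp, getLast_eq_D]
    simpa [cons_prefix_cons] using hxy

lemma valleys_nest_add (p q : DyckWord) :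
    (p.nest + q).valleys = p.valleys + q.valleys + if q = 0 then 0 else 1 := by
  have hp : (p.toList.countSplits fun _ s => [D, U] <+: s ++ D :: q.toList) = p.valleys :=
    countSplits_congr fun i hi => pair_prefix_drop_append_D_iff (by simp) p hi q
  have hq : [D, U] <+: D :: q.toList ↔ q ≠ 0 := by
    rcases q.eq_zero_or_exists_toList_eq_U_cons with rfl | ⟨l, hl⟩ <;>
      simp [*, cons_prefix_cons, ← toList_ne_nil]
  rw [valleys, toList_nest_add, countSplits_cons_append_cons, hp]
  simp only [cons_prefix_cons, reduceCtorEq, false_and, ↓reduceIte, valleys, zero_add, hq,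
    ne_eq, ite_not]
  ring

lemma peaks_nest_add (p q : DyckWord) :
    (p.nest + q).peaks = p.peaks + q.peaks + if p = 0 then 1 else 0 := by
  have hp : (p.toList.countSplits fun _ s => [U, D] <+: s ++ D :: q.toList) = p.peaks :=
    countSplits_congr fun i hi => pair_prefix_drop_append_D_iff (by simp) p hi q
  have hp₀ : [U, D] <+: U :: (p.toList ++ D :: q.toList) ↔ p = 0 := by
    rcases p.eq_zero_or_exists_toList_eq_U_cons with rfl | ⟨l, hl⟩ <;>
      simp [*, cons_prefix_cons, ← toList_ne_nil]
  rw [peaks, toList_nest_add, countSplits_cons_append_cons, hp]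
  simp only [hp₀, peaks, cons_prefix_cons, reduceCtorEq, false_and, ↓reduceIte, add_zero]
  ring

/-- The peaks of `p` are lifted by one level, while the peaks of `q` keep their height. -/
lemma highPeaks_nest_add (p q : DyckWord) :
    (p.nest + q).highPeaks = p.peaks + q.highPeaks := by
  have hp : (p.toList.countSplits fun a s =>
      [U, D] <+: s ++ D :: q.toList ∧ (U :: a).count D < (U :: a).count U) = p.peaks := by
    refine countSplits_congr fun i hi => ?_
    have := p.count_D_le_count_U i
    rw [pair_prefix_drop_append_D_iff (by simp) p hi q, count_cons_self, count_cons_of_ne (by simp),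
      and_iff_left (by omega)]
  have hq : (q.toList.countSplits fun a s => [U, D] <+: s ∧
      (U :: (p.toList ++ D :: a)).count D < (U :: (p.toList ++ D :: a)).count U) =
      q.highPeaks := by
    refine countSplits_congr fun i _ => and_congr_right fun _ => ?_
    have := p.count_U_eq_count_D
    simp only [count_cons_self, count_cons_of_ne (by simp : D ≠ U),
      count_cons_of_ne (by simp : U ≠ D), count_append]
    omega
  rw [highPeaks, toList_nest_add, countSplits_cons_append_cons, hp, hq]
  simp [cons_prefix_cons]

lemma peaks_eq_valleys_add (p : DyckWord) : p.peaks = p.valleys + if p = 0 then 0 else 1 := by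
  rw [← ofTree_toTree p]
  induction p.toTree with
  | nil => rfl
  | node _ l r ihl ihr =>
    simp only [ofTree, peaks_nest_add, valleys_nest_add, ihl, ihr, nest_add_ne_zero, ↓reduceIte]
    split_ifs <;> omega

lemma valleys_ofTree_twist (t : BinaryTree Unit) :
    (ofTree t.twist).valleys = (ofTree t).highPeaks := by
  induction t with
  | nil => rfl
  | node _ l r _ ihr =>
    simp only [BinaryTree.twist, ofTree, valleys_nest_add, highPeaks_nest_add, ihr,
      peaks_eq_valleys_add]
    omega

@[simp]
lemma semilength_ofTree (t : BinaryTree Unit) : (ofTree t).semilength = t.numNodes := by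
  rw [← numNodes_toTree, toTree_ofTree]

theorem card_highPeaks_eq_card_valleys (n k : ℕ) :
    Nat.card {p : DyckWord // p.semilength = n ∧ p.highPeaks = k} =
      Nat.card {p : DyckWord // p.semilength = n ∧ p.valleys = k} :=
  Nat.card_congr <| (equivTree.trans (BinaryTree.twistEquiv.trans equivTree.symm)).subtypeEquiv
    fun p => by simp [valleys_ofTree_twist, ofTree_toTree]

end DyckWord

namespace DyckStep

def ofBool : Bool → DyckStep
  | true => U
  | false => D

@[simp] lemma ofBool_true : ofBool true = U := rfl
@[simp] lemma ofBool_false : ofBool false = D := rfl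

lemma ofBool_injective : Function.Injective ofBool := by
  intro a b
  cases a <;> cases b <;> simp

end DyckStep

section Encoding

open DyckStep List

def dyckSteps {m : ℕ} (w : Fin m → Bool) : List DyckStep := List.ofFn fun i => ofBool (w i)

@[simp]
lemma length_dyckSteps {m : ℕ} (w : Fin m → Bool) : (dyckSteps w).length = m := by
  simp [dyckSteps]

lemma dyckSteps_injective {m : ℕ} : Function.Injective (dyckSteps (m := m)) :=
  fun _ _ h => funext fun i => ofBool_injective (congrFun (List.ofFn_injective h) i)

lemma exists_dyckSteps_eq {m : ℕ} (l : List DyckStep) (hl : l.length = m) :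
    ∃ w : Fin m → Bool, dyckSteps w = l := by
  refine ⟨fun i => decide (l[i] = U), ext_getElem (by simp [hl]) fun i _ _ => ?_⟩
  cases h : l[i] <;> simp [dyckSteps, h]

lemma getElem?_dyckSteps_eq_some_ofBool_iff {m : ℕ} (w : Fin m → Bool) (j : ℕ) (b : Bool) :
    (dyckSteps w)[j]? = some (ofBool b) ↔ j < m ∧ ltr w (j + 1) = b := by
  by_cases hj : j < m
  · simp [dyckSteps, ltr, hj, ofBool_injective.eq_iff]
  · simp [dyckSteps, hj]

lemma pcnt_add_one {m : ℕ} (w : Fin m → Bool) (b : Bool) (i : ℕ) :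
    pcnt w b (i + 1) = pcnt w b i + if ltr w (i + 1) = b then 1 else 0 := by
  rw [pcnt, pcnt, ← Finset.insert_Icc_right_eq_Icc_add_one (by omega), Finset.filter_insert]
  split_ifs
  · exact Finset.card_insert_of_notMem (by simp)
  · rfl

lemma count_take_dyckSteps {m : ℕ} (w : Fin m → Bool) (b : Bool) {i : ℕ} (hi : i ≤ m) :
    ((dyckSteps w).take i).count (ofBool b) = pcnt w b i := by
  induction i with
  | zero => simp [pcnt]
  | succ i ih =>
    have hget : (dyckSteps w)[i]? = some (ofBool (ltr w (i + 1))) :=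
      (getElem?_dyckSteps_eq_some_ofBool_iff w i _).mpr ⟨hi, rfl⟩
    rw [take_add_one, count_append, ih (by omega), pcnt_add_one, hget]
    simp [count_singleton, ofBool_injective.eq_iff]

lemma isDyck_iff {n : ℕ} (w : Fin (2 * n) → Bool) :
    IsDyck n w ↔ (dyckSteps w).count U = n ∧
      ∀ i, ((dyckSteps w).take i).count D ≤ ((dyckSteps w).take i).count U := by
  have hcount (b : Bool) (i : ℕ) :
      ((dyckSteps w).take i).count (ofBool b) = pcnt w b (min i (2 * n)) := by
    rw [take_eq_take_min, length_dyckSteps, count_take_dyckSteps w b (min_le_right _ _)]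
  have hlength : (dyckSteps w).count U = pcnt w true (2 * n) := by
    rw [← count_take_dyckSteps w true le_rfl, take_of_length_le (by simp), ofBool_true]
  rw [IsDyck, hlength]
  refine and_congr Iff.rfl ⟨fun h i => ?_, fun h i hi => ?_⟩
  · have := h _ (min_le_right i (2 * n))
    rwa [← hcount, ← hcount] at this
  · rw [← min_eq_left hi, ← hcount, ← hcount]
    exact h i

def toDyckWord {n : ℕ} {w : Fin (2 * n) → Bool} (hw : IsDyck n w) : DyckWord where
  toList := dyckSteps w
  count_U_eq_count_D := by
    have hsum := count_U_add_count_D (dyckSteps w)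
    have hU := ((isDyck_iff w).mp hw).1
    rw [length_dyckSteps] at hsum
    omega
  count_D_le_count_U := ((isDyck_iff w).mp hw).2

lemma semilength_toDyckWord {n : ℕ} {w : Fin (2 * n) → Bool} (hw : IsDyck n w) :
    (toDyckWord hw).semilength = n :=
  ((isDyck_iff w).mp hw).1

noncomputable def isDyckEquiv (n : ℕ) :
    {w : Fin (2 * n) → Bool // IsDyck n w} ≃ {p : DyckWord // p.semilength = n} :=
  Equiv.ofBijective (fun w => ⟨toDyckWord w.2, semilength_toDyckWord w.2⟩) <| by
    refine ⟨fun w w' h => Subtype.ext (dyckSteps_injective ?_), fun ⟨p, hp⟩ => ?_⟩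
    · exact congrArg (fun p => p.1.toList) h
    obtain ⟨w, hw⟩ :=
      exists_dyckSteps_eq p.toList (by rw [← p.two_mul_semilength_eq_length, hp])
    have hdyck : IsDyck n w := (isDyck_iff w).mpr (hw ▸ ⟨hp, p.count_D_le_count_U⟩)
    exact ⟨⟨w, hdyck⟩, Subtype.ext (DyckWord.ext hw)⟩

lemma card_isDyck_and_eq {n k : ℕ} {f : (Fin (2 * n) → Bool) → ℕ} {g : DyckWord → ℕ}
    (hfg : ∀ w (hw : IsDyck n w), f w = g (toDyckWord hw)) :
    Nat.card {w // IsDyck n w ∧ f w = k} =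
      Nat.card {p : DyckWord // p.semilength = n ∧ g p = k} :=
  Nat.card_congr <| (Equiv.subtypeSubtypeEquivSubtypeInter _ (f · = k)).symm.trans <|
    ((isDyckEquiv n).subtypeEquiv fun w => by rw [hfg w.1 w.2]; rfl).trans
      (Equiv.subtypeSubtypeEquivSubtypeInter (·.semilength = n) (g · = k))

lemma card_Des_eq {n : ℕ} (w : Fin (2 * n) → Bool) :
    (Des w).card = (dyckSteps w).countSplits fun _ s => [D, U] <+: s := by
  refine (countSplits_eq_card_filter_Icc (length_dyckSteps w) fun j hj => ?_).symm
  rw [pair_prefix_drop_iff, ← ofBool_false, ← ofBool_true,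
    getElem?_dyckSteps_eq_some_ofBool_iff, getElem?_dyckSteps_eq_some_ofBool_iff]
  tauto

lemma card_HP_eq {n : ℕ} (w : Fin (2 * n) → Bool) :
    (HP w).card =
      (dyckSteps w).countSplits fun a s => [U, D] <+: s ∧ a.count D < a.count U := by
  refine (countSplits_eq_card_filter_Icc (length_dyckSteps w) fun j hj => ?_).symm
  rw [pair_prefix_drop_iff, ← ofBool_false, ← ofBool_true,
    getElem?_dyckSteps_eq_some_ofBool_iff, getElem?_dyckSteps_eq_some_ofBool_iff,
    count_take_dyckSteps w _ hj.le, count_take_dyckSteps w _ hj.le, pcnt_add_one, pcnt_add_one]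
  cases ltr w (j + 1) <;> simp [hj, and_assoc]

end Encoding

/-- The number of Dyck paths of length `2n` with exactly `k` high peaks equals
the number of Dyck paths of length `2n` with exactly `k` descents. -/
theorem highPeaks_equidistributed_with_descents (n k : ℕ) :
    Nat.card {w : Fin (2 * n) → Bool // IsDyck n w ∧ (HP w).card = k} =
      Nat.card {w : Fin (2 * n) → Bool // IsDyck n w ∧ (Des w).card = k} := by
  rw [card_isDyck_and_eq (g := DyckWord.highPeaks) fun w _ => card_HP_eq w,
    card_isDyck_and_eq (g := DyckWord.valleys) fun w _ => card_Des_eq w]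
  exact DyckWord.card_highPeaks_eq_card_valleys n k
end

section
/- For any fixed Dyck path W of length 2n and any S ⊆ [2n-1], the flag h-vector β of the distributive lattice J(2 × n) satisfies β(S) = |{w ∈ D_n : D_W(w) = S}|, where D_W(w) is the descent set of w with respect to W. -/
/-!
A Dyck path `w` is a linear extension of the poset `2 × n` (its `k`-th `v` is `(0, k)`, its
`k`-th `h` is `(1, k)`), and, `W` being a Dyck path too, the positions of the steps in `W`
form a natural labelling of `2 × n`; `D_W(w)` is the descent set of `w` read in that
labelling. For any finite poset with a natural labelling, the chains of order ideals with rank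
set `T` correspond bijectively to the linear extensions with descent set contained in `T`:
a linear extension gives the chain of its prefixes of sizes in `T`, and a chain is recovered
from the unique linear extension that lists the successive differences of the chain one after
another, each in increasing order of labels. Hence `α(T) = #{w | D_W(w) ⊆ T}`, and
inclusion–exclusion over the subsets of `S` gives `β(S) = #{w | D_W(w) = S}`.
-/

open Finset

/-- The (1-indexed) position in `W` of the `j`-th occurrence of the letter `b`. -/
def occPos {m : ℕ} (W : Fin m → Bool) (b : Bool) (j : ℕ) : ℕ :=
  ((Finset.Icc 1 m).filter fun i => ltr W i = b ∧ pcnt W b i = j).sup id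

/-- The descent set of `w` with respect to a fixed Dyck path `W`, in the encoding
with letters `v_1,…,v_n,h_1,…,h_n`: positions `i` such that the letter `w_{i+1}`
comes before the letter `w_i` in `W`. -/
def DWset {n : ℕ} (W w : Fin (2 * n) → Bool) : Finset ℕ :=
  (Finset.Icc 1 (2 * n - 1)).filter fun i =>
    occPos W (ltr w (i + 1)) (pcnt w (ltr w (i + 1)) (i + 1)) <
      occPos W (ltr w i) (pcnt w (ltr w i) i)

/-- The flag `f`-vector of the distributive lattice `J(2 × n)` of order ideals
(lower sets) of `2 × n`: the number of chains of lower sets whose set of ranks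
(cardinalities) is `S`. -/
noncomputable def flagAlpha (n : ℕ) (S : Finset ℕ) : ℕ :=
  Nat.card {C : Finset (Finset (Fin 2 × Fin n)) //
    (∀ I ∈ C, IsLowerSet (↑I : Set (Fin 2 × Fin n))) ∧
    IsChain (· ⊆ ·) (↑C : Set (Finset (Fin 2 × Fin n))) ∧
    C.image Finset.card = S}

/-- The flag `h`-vector of `J(2 × n)`. -/
noncomputable def flagBeta (n : ℕ) (S : Finset ℕ) : ℤ :=
  ∑ T ∈ S.powerset, (-1 : ℤ) ^ (S.card - T.card) * (flagAlpha n T : ℤ)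

section InclusionExclusion

variable {ι : Type*} [DecidableEq ι]

theorem sum_powerset_filter_superset_neg_one_pow (A S : Finset ι) :
    ∑ T ∈ S.powerset with A ⊆ T, (-1 : ℤ) ^ (#S - #T) = if A = S then 1 else 0 := by
  by_cases hAS : A ⊆ S
  · have hreindex : ∑ T ∈ S.powerset with A ⊆ T, (-1 : ℤ) ^ (#S - #T) =
        ∑ U ∈ (S \ A).powerset, (-1 : ℤ) ^ #U := by
      refine Finset.sum_nbij' (S \ ·) (S \ ·) ?_ ?_ ?_ ?_ ?_
      · intro T hT
        simp only [mem_filter, mem_powerset] at hT ⊢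
        exact sdiff_subset_sdiff subset_rfl hT.2
      · intro U hU
        simp only [mem_filter, mem_powerset] at hU ⊢
        exact ⟨sdiff_subset, subset_sdiff.mpr ⟨hAS, (subset_sdiff.mp hU).2.symm⟩⟩
      · intro T hT
        simp only [mem_filter, mem_powerset] at hT
        exact Finset.sdiff_sdiff_eq_self hT.1
      · intro U hU
        simp only [mem_powerset] at hU
        exact Finset.sdiff_sdiff_eq_self (hU.trans sdiff_subset)
      · intro T hT
        simp only [mem_filter, mem_powerset] at hT
        rw [card_sdiff_of_subset hT.1]
    rw [hreindex, sum_powerset_neg_one_pow_card]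
    exact if_congr (sdiff_eq_empty_iff_subset.trans ⟨hAS.antisymm, fun h => h ▸ subset_rfl⟩)
      rfl rfl
  · have hempty : ({T ∈ S.powerset | A ⊆ T} : Finset (Finset ι)) = ∅ :=
      filter_eq_empty_iff.mpr fun T hT hAT => hAS (hAT.trans (mem_powerset.mp hT))
    rw [hempty, sum_empty, if_neg (fun h => hAS h.subset)]

theorem sum_neg_one_pow_mul_card_filter_subset {X : Type*} (s : Finset X) (D : X → Finset ι)
    (S : Finset ι) :
    ∑ T ∈ S.powerset, (-1 : ℤ) ^ (#S - #T) * #{x ∈ s | D x ⊆ T} =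
      #{x ∈ s | D x = S} := by
  calc ∑ T ∈ S.powerset, (-1 : ℤ) ^ (#S - #T) * #{x ∈ s | D x ⊆ T}
      = ∑ x ∈ s, ∑ T ∈ S.powerset with D x ⊆ T, (-1 : ℤ) ^ (#S - #T) := by
        simp only [card_filter, Nat.cast_sum, Nat.cast_ite, Nat.cast_one, Nat.cast_zero,
          mul_sum, mul_ite, mul_one, mul_zero, sum_filter]
        exact sum_comm
    _ = ∑ x ∈ s, if D x = S then 1 else 0 := by
        simp only [sum_powerset_filter_superset_neg_one_pow]
    _ = #{x ∈ s | D x = S} := by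
        rw [card_filter]; push_cast; rfl

end InclusionExclusion

section LinearExtension

variable {α : Type*} {N : ℕ}

def IsLinearExtension [PartialOrder α] (e : Fin N → α) : Prop :=
  Function.Bijective e ∧ ∀ i j, e i ≤ e j → i ≤ j

/-- A chain of `J(α)` with rank set `T`. -/
def IsLowerSetChainWithRanks [PartialOrder α] (T : Finset ℕ) (C : Finset (Finset α)) : Prop :=
  (∀ I ∈ C, IsLowerSet (↑I : Set α)) ∧ IsChain (· ⊆ ·) (↑C : Set (Finset α)) ∧
    C.image Finset.card = T

/-- The labels read along `e`, with junk value `0` from position `N` on. -/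
def labelSeq (lab : α → ℕ) (e : Fin N → α) (k : ℕ) : ℕ :=
  if h : k < N then lab (e ⟨k, h⟩) else 0

/-- Positions are `0`-indexed, so a descent `k` separates the first `k` elements from the
rest, matching the rank `k` of a chain. -/
def descentSet (lab : α → ℕ) (e : Fin N → α) : Finset ℕ :=
  {k ∈ Finset.Icc 1 (N - 1) | labelSeq lab e k < labelSeq lab e (k - 1)}

section Decidable

variable [DecidableEq α]

def prefixSet (e : Fin N → α) (s : ℕ) : Finset α :=
  ({i | (i : ℕ) < s} : Finset (Fin N)).image e

def prefixChain (T : Finset ℕ) (e : Fin N → α) : Finset (Finset α) :=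
  T.image (prefixSet e)

def level (C : Finset (Finset α)) (x : α) : ℕ :=
  #{I ∈ C | x ∉ I}

/-- Sorting by this key lists the successive differences of the chain `C` one after another,
each in increasing order of labels. -/
def levelKey (lab : α → ℕ) (C : Finset (Finset α)) (x : α) : ℕ ×ₗ ℕ :=
  toLex (level C x, lab x)

end Decidable

theorem existsUnique_strictMono_comp [Fintype α] {β : Type*} [LinearOrder β] (key : α → β)
    (hkey : Function.Injective key) (hN : Fintype.card α = N) :
    ∃! e : Fin N → α, StrictMono (key ∘ e) := by
  have hcard : #(univ.image key) = N := by
    rw [card_image_of_injective _ hkey, card_univ, hN]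
  have hsurj : ∀ i, ∃ x, key x = (univ.image key).orderEmbOfFin hcard i := fun i => by
    obtain ⟨x, -, hx⟩ := mem_image.mp ((univ.image key).orderEmbOfFin_mem hcard i)
    exact ⟨x, hx⟩
  choose e he using hsurj
  refine ⟨e, show StrictMono (key ∘ e) from ?_, fun e' he' => funext fun i => hkey ?_⟩
  · rw [show key ∘ e = _ from funext he]
    exact OrderEmbedding.strictMono _
  · rw [he i, ← orderEmbOfFin_unique hcard (fun _ => mem_image_of_mem _ (mem_univ _)) he']

section PartialOrder

variable [PartialOrder α] {e : Fin N → α}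

theorem IsLinearExtension.of_le_imp_le [Fintype α] (hN : Fintype.card α = N)
    (h : ∀ i j, e i ≤ e j → i ≤ j) : IsLinearExtension e :=
  ⟨(Fintype.bijective_iff_injective_and_card e).mpr
    ⟨fun i j hij => le_antisymm (h i j hij.le) (h j i hij.ge), by simp [hN]⟩, h⟩

theorem isLinearExtension_of_strictMono_comp [Fintype α] {β : Type*} [Preorder β]
    {key : α → β} (hN : Fintype.card α = N) (hkey : StrictMono key)
    (he : StrictMono (key ∘ e)) :
    IsLinearExtension e := by
  refine .of_le_imp_le hN fun i j hij => ?_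
  rcases hij.lt_or_eq with h | h
  · exact (he.lt_iff_lt.mp (hkey h)).le
  · exact (he.injective.of_comp h).le

theorem IsLinearExtension.injective_of_injective_comp (he : IsLinearExtension e) {lab : α → ℕ}
    (h : Function.Injective (lab ∘ e)) : Function.Injective lab := by
  intro x y hxy
  obtain ⟨i, rfl⟩ := he.1.2 x
  obtain ⟨j, rfl⟩ := he.1.2 y
  exact congrArg e (h hxy)

theorem IsLinearExtension.strictMono_of_strictMono_comp (he : IsLinearExtension e)
    {lab : α → ℕ} (h : StrictMono (lab ∘ e)) : StrictMono lab := by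
  intro x y hxy
  obtain ⟨i, rfl⟩ := he.1.2 x
  obtain ⟨j, rfl⟩ := he.1.2 y
  exact h (lt_of_le_of_ne (he.2 i j hxy.le) fun hij => hxy.ne (congrArg e hij))

end PartialOrder

theorem labelSeq_lt_of_forall_not_mem_descentSet {e : Fin N → α} {lab : α → ℕ}
    (hinj : Function.Injective (lab ∘ e)) {i j : ℕ} (hij : i < j) (hjN : j < N)
    (hdes : ∀ k, i < k → k ≤ j → k ∉ descentSet lab e) :
    labelSeq lab e i < labelSeq lab e j := by
  have hstep : ∀ k, i < k → k ≤ j → labelSeq lab e (k - 1) < labelSeq lab e k := by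
    intro k hik hkj
    have hk := hdes k hik hkj
    simp only [descentSet, mem_filter, mem_Icc, not_and, not_lt] at hk
    refine lt_of_le_of_ne (hk ⟨by omega, by omega⟩) fun heq => ?_
    simp only [labelSeq, dif_pos (show k < N by omega), dif_pos (show k - 1 < N by omega)] at heq
    have := Fin.ext_iff.mp (hinj heq)
    simp only at this
    omega
  refine strictMonoOn_of_lt_succ Set.ordConnected_Icc (fun a _ ha hsa => ?_)
    ⟨le_rfl, hij.le⟩ ⟨hij.le, le_rfl⟩ hij
  simp only [Order.succ_eq_add_one, Set.mem_Icc] at ha hsa ⊢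
  simpa using hstep (a + 1) (by omega) hsa.2

section Prefix

variable [DecidableEq α] {e : Fin N → α}

theorem mem_prefixSet (he : Function.Injective e) {i : Fin N} {s : ℕ} :
    e i ∈ prefixSet e s ↔ (i : ℕ) < s := by
  simp [prefixSet, he.eq_iff]

theorem card_prefixSet (he : Function.Injective e) {s : ℕ} (hs : s ≤ N) :
    #(prefixSet e s) = s := by
  rw [prefixSet, card_image_of_injective _ he, Fin.card_filter_val_lt, min_eq_right hs]

theorem card_prefixSet_le {s : ℕ} : #(prefixSet e s) ≤ s :=
  card_image_le.trans (Fin.card_filter_val_lt.trans_le (min_le_right _ _))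

theorem prefixSet_mono {s t : ℕ} (hst : s ≤ t) : prefixSet e s ⊆ prefixSet e t :=
  image_subset_image fun i hi => by simp only [mem_filter, mem_univ, true_and] at hi ⊢; omega

theorem IsLinearExtension.isLowerSet_prefixSet [PartialOrder α] (he : IsLinearExtension e)
    (s : ℕ) : IsLowerSet (↑(prefixSet e s) : Set α) := by
  intro y x hxy hy
  obtain ⟨i, rfl⟩ := he.1.2 x
  obtain ⟨j, rfl⟩ := he.1.2 y
  rw [mem_coe, mem_prefixSet he.1.1] at hy ⊢
  exact lt_of_le_of_lt (he.2 i j hxy) hy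

theorem IsLinearExtension.isLowerSetChainWithRanks_prefixChain [PartialOrder α]
    (he : IsLinearExtension e) {T : Finset ℕ} (hT : ∀ s ∈ T, s ≤ N) :
    IsLowerSetChainWithRanks T (prefixChain T e) := by
  refine ⟨?_, ?_, ?_⟩
  · simp only [prefixChain, mem_image]
    rintro _ ⟨s, -, rfl⟩
    exact he.isLowerSet_prefixSet s
  · simp only [IsChain, prefixChain, coe_image]
    rintro _ ⟨s, -, rfl⟩ _ ⟨t, -, rfl⟩ -
    rcases le_total s t with hst | hts
    · exact Or.inl (prefixSet_mono hst)
    · exact Or.inr (prefixSet_mono hts)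
  · rw [prefixChain, image_image]
    exact (image_congr fun s hs => card_prefixSet he.1.1 (hT s hs)).trans image_id

variable {T : Finset ℕ}

theorem filter_prefixChain_not_mem_subset (he : Function.Injective e) {i j : Fin N}
    (hij : i ≤ j) :
    {I ∈ prefixChain T e | e i ∉ I} ⊆ {I ∈ prefixChain T e | e j ∉ I} := by
  intro I hI
  simp only [mem_filter, prefixChain, mem_image] at hI ⊢
  obtain ⟨⟨s, hs, rfl⟩, hi⟩ := hI
  refine ⟨⟨s, hs, rfl⟩, fun hj => hi ?_⟩
  rw [mem_prefixSet he] at hi hj ⊢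
  exact lt_of_le_of_lt (Fin.le_def.mp hij) hj

theorem level_prefixChain_le (he : Function.Injective e) {i j : Fin N} (hij : i ≤ j) :
    level (prefixChain T e) (e i) ≤ level (prefixChain T e) (e j) :=
  card_le_card (filter_prefixChain_not_mem_subset he hij)

theorem level_prefixChain_lt (he : Function.Injective e) {i j : Fin N} {s : ℕ} (hs : s ∈ T)
    (his : (i : ℕ) < s) (hsj : s ≤ j) :
    level (prefixChain T e) (e i) < level (prefixChain T e) (e j) := by
  refine card_lt_card ((ssubset_iff_of_subset
    (filter_prefixChain_not_mem_subset he (Fin.le_def.mpr (by omega)))).mpr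
      ⟨prefixSet e s, ?_, ?_⟩)
  · simp only [mem_filter, prefixChain, mem_image, mem_prefixSet he, not_lt]
    exact ⟨⟨s, hs, rfl⟩, hsj⟩
  · simp only [mem_filter, mem_prefixSet he]
    exact fun h => h.2 his

/-- Within a block of positions not separated by an element of `T` the labels increase, since
`e` has no descent there. -/
theorem IsLinearExtension.strictMono_levelKey_prefixChain [PartialOrder α]
    (he : IsLinearExtension e) {lab : α → ℕ} (hlab : Function.Injective lab)
    (hdes : descentSet lab e ⊆ T) : StrictMono (levelKey lab (prefixChain T e) ∘ e) := by
  intro i j hij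
  simp only [Function.comp_apply, levelKey, Prod.Lex.toLex_lt_toLex]
  rcases (level_prefixChain_le he.1.1 hij.le).lt_or_eq with hlt | heq
  · exact Or.inl hlt
  refine Or.inr ⟨heq, ?_⟩
  have hnodes : ∀ k, (i : ℕ) < k → k ≤ j → k ∉ descentSet lab e := fun k hik hkj hk =>
    (level_prefixChain_lt he.1.1 (hdes hk) hik hkj).ne heq
  simpa [labelSeq] using
    labelSeq_lt_of_forall_not_mem_descentSet (hlab.comp he.1.1) hij j.2 hnodes

end Prefix

section LevelKey

variable [DecidableEq α] {C : Finset (Finset α)} {lab : α → ℕ}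

theorem levelKey_injective (hlab : Function.Injective lab) :
    Function.Injective (levelKey lab C) :=
  fun _ _ h => hlab (Prod.ext_iff.mp (toLex.injective h)).2

theorem levelKey_strictMono [PartialOrder α] (hlow : ∀ I ∈ C, IsLowerSet (↑I : Set α))
    (hlab : StrictMono lab) : StrictMono (levelKey lab C) := by
  intro x y hxy
  have hle : level C x ≤ level C y := card_le_card fun I hI => by
    simp only [mem_filter] at hI ⊢
    exact ⟨hI.1, fun hy => hI.2 (hlow I hI.1 hxy.le hy)⟩
  rw [levelKey, levelKey, Prod.Lex.toLex_lt_toLex]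
  rcases hle.lt_or_eq with h | h
  · exact Or.inl h
  · exact Or.inr ⟨h, hlab hxy⟩

variable (hC : IsChain (· ⊆ ·) (↑C : Set (Finset α)))
include hC

theorem mem_of_levelKey_lt {I : Finset α} (hI : I ∈ C) {x y : α} (hx : x ∈ I)
    (hyx : levelKey lab C y < levelKey lab C x) : y ∈ I := by
  by_contra hy
  have hsub : {J ∈ C | x ∉ J} ⊂ {J ∈ C | y ∉ J} := by
    refine (ssubset_iff_of_subset fun J hJ => ?_).mpr ⟨I, by simp [hI, hy], by simp [hx]⟩
    simp only [mem_filter] at hJ ⊢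
    refine ⟨hJ.1, fun hyJ => ?_⟩
    rcases hC.total (mem_coe.mpr hJ.1) (mem_coe.mpr hI) with hJI | hIJ
    · exact hy (hJI hyJ)
    · exact hJ.2 (hIJ hx)
  have hlt : level C x < level C y := card_lt_card hsub
  rw [levelKey, levelKey, Prod.Lex.toLex_lt_toLex] at hyx
  omega

variable {e : Fin N → α} (he : StrictMono (levelKey lab C ∘ e)) (hsurj : Function.Surjective e)
include he hsurj

theorem prefixSet_card_eq {I : Finset α} (hI : I ∈ C) : prefixSet e #I = I := by
  have hinj : Function.Injective e := he.injective.of_comp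
  refine (eq_of_subset_of_card_le (fun x hx => ?_) card_prefixSet_le).symm
  obtain ⟨i, rfl⟩ := hsurj x
  rw [mem_prefixSet hinj]
  by_contra hi
  have hsub : prefixSet e (i + 1) ⊆ I := by
    intro y hy
    obtain ⟨j, hj, rfl⟩ := mem_image.mp hy
    simp only [mem_filter, mem_univ, true_and] at hj
    rcases (show j ≤ i from Fin.le_def.mpr (by omega)).lt_or_eq with hlt | rfl
    · exact mem_of_levelKey_lt hC hI hx (he hlt)
    · exact hx
  have := card_le_card hsub
  rw [card_prefixSet hinj i.2] at this
  omega

theorem prefixChain_image_card : prefixChain (C.image card) e = C := by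
  rw [prefixChain, image_image]
  exact (image_congr fun I hI => prefixSet_card_eq hC he hsurj hI).trans image_id

theorem descentSet_subset_image_card : descentSet lab e ⊆ C.image card := by
  intro k hk
  simp only [descentSet, mem_filter, mem_Icc] at hk
  obtain ⟨⟨hk1, hkN⟩, hdesc⟩ := hk
  by_contra hkT
  have hinj : Function.Injective e := he.injective.of_comp
  have hlevel : level C (e ⟨k - 1, by omega⟩) = level C (e ⟨k, by omega⟩) := by
    refine congrArg card (filter_congr fun I hI => ?_)
    have hIk : #I ≠ k := fun h => hkT (mem_image.mpr ⟨I, hI, h⟩)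
    rw [← prefixSet_card_eq hC he hsurj hI, mem_prefixSet hinj, mem_prefixSet hinj]
    simp only
    omega
  have hlt := he (show (⟨k - 1, by omega⟩ : Fin N) < ⟨k, by omega⟩ from
    Fin.lt_def.mpr (by simp only; omega))
  simp only [Function.comp_apply, levelKey, Prod.Lex.toLex_lt_toLex, hlevel, lt_irrefl,
    false_or, true_and] at hlt
  simp only [labelSeq, dif_pos (show k < N by omega), dif_pos (show k - 1 < N by omega)] at hdesc
  exact lt_asymm hlt hdesc

end LevelKey

theorem card_lowerSetChains_eq_card_linearExtensions [PartialOrder α] [Fintype α]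
    [DecidableEq α] (lab : α → ℕ) (hinj : Function.Injective lab) (hmono : StrictMono lab)
    (hN : Fintype.card α = N) {T : Finset ℕ} (hT : ∀ s ∈ T, s ≤ N) :
    Nat.card {C : Finset (Finset α) // IsLowerSetChainWithRanks T C} =
      Nat.card {e : Fin N → α // IsLinearExtension e ∧ descentSet lab e ⊆ T} := by
  symm
  refine Nat.card_eq_of_bijective
    (fun e => ⟨prefixChain T e.1, e.2.1.isLowerSetChainWithRanks_prefixChain hT⟩) ⟨?_, ?_⟩
  · rintro ⟨e, he, hdes⟩ ⟨e', he', hdes'⟩ h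
    have hC : prefixChain T e' = prefixChain T e := (congrArg Subtype.val h).symm
    have huniq :=
      existsUnique_strictMono_comp _ (levelKey_injective (C := prefixChain T e) hinj) hN
    refine Subtype.ext (huniq.unique (he.strictMono_levelKey_prefixChain hinj hdes) ?_)
    rw [← hC]
    exact he'.strictMono_levelKey_prefixChain hinj hdes'
  · rintro ⟨C, hlow, hchain, hrank⟩
    obtain ⟨e, he, -⟩ := existsUnique_strictMono_comp _ (levelKey_injective (C := C) hinj) hN
    have hlin := isLinearExtension_of_strictMono_comp hN (levelKey_strictMono hlow hmono) he
    refine ⟨⟨e, hlin, hrank ▸ descentSet_subset_image_card hchain he hlin.1.2⟩,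
      Subtype.ext ?_⟩
    simp only [← hrank]
    exact prefixChain_image_card hchain he hlin.1.2

end LinearExtension

section Words

variable {m : ℕ} {w : Fin m → Bool}

def prefixCount (w : Fin m → Bool) (b : Bool) (s : ℕ) : ℕ :=
  #{j : Fin m | (j : ℕ) < s ∧ w j = b}

theorem ltr_val_add_one (j : Fin m) : ltr w (j + 1) = w j := by
  rw [ltr, dif_pos ⟨by omega, j.2⟩]
  rfl

theorem pcnt_eq_prefixCount {b : Bool} {s : ℕ} (hs : s ≤ m) :
    pcnt w b s = prefixCount w b s := by
  rw [pcnt, prefixCount]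
  refine (card_nbij (fun j : Fin m => (j : ℕ) + 1) (fun j hj => ?_) (fun i _ j _ h => ?_)
    (fun p hp => ?_)).symm
  · simp only [coe_filter, mem_univ, true_and, Set.mem_ofPred_eq, mem_Icc] at hj ⊢
    exact ⟨⟨by omega, by omega⟩, (ltr_val_add_one j).trans hj.2⟩
  · exact Fin.ext (by simpa using h)
  · simp only [coe_filter, mem_Icc, Set.mem_ofPred_eq] at hp
    refine ⟨⟨p - 1, by omega⟩, ?_, by simp only; omega⟩
    simp only [coe_filter, mem_univ, true_and, Set.mem_ofPred_eq]
    refine ⟨by omega, ?_⟩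
    rw [← ltr_val_add_one (w := w)]
    simpa [Nat.sub_add_cancel hp.1.1] using hp.2

theorem prefixCount_true_add_false (s : ℕ) :
    prefixCount w true s + prefixCount w false s = min m s := by
  rw [← Fin.card_filter_val_lt, ← card_filter_add_card_filter_not (p := fun j : Fin m => w j),
    filter_filter, filter_filter]
  simp [prefixCount]

theorem prefixCount_mono (b : Bool) {s t : ℕ} (hst : s ≤ t) :
    prefixCount w b s ≤ prefixCount w b t :=
  card_le_card fun j hj => by
    simp only [mem_filter, mem_univ, true_and] at hj ⊢
    exact ⟨by omega, hj.2⟩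

theorem prefixCount_val_add_one (j : Fin m) :
    prefixCount w (w j) (j + 1) = prefixCount w (w j) j + 1 := by
  rw [prefixCount, prefixCount, ← card_insert_of_notMem (s := {i : Fin m | _}) (a := j)
    (by simp)]
  congr 1
  ext i
  simp only [mem_filter, mem_univ, true_and, mem_insert]
  constructor
  · rintro ⟨hi, hw⟩
    rcases Nat.lt_succ_iff_lt_or_eq.mp hi with h | h
    · exact Or.inr ⟨h, hw⟩
    · exact Or.inl (Fin.ext h)
  · rintro (rfl | ⟨hi, hw⟩)
    · exact ⟨by omega, rfl⟩
    · exact ⟨by omega, hw⟩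

theorem pcnt_lt_pcnt {b : Bool} {x q : ℕ} (hq : ltr w q = b) (hxq : x < q) :
    pcnt w b x < pcnt w b q := by
  refine card_lt_card ((ssubset_iff_of_subset ?_).mpr ⟨q, ?_, ?_⟩)
  · exact monotone_filter_left _ (Icc_subset_Icc le_rfl hxq.le)
  · simp only [mem_filter, mem_Icc]
    exact ⟨⟨by omega, le_rfl⟩, hq⟩
  · simp only [mem_filter, mem_Icc]
    omega

theorem occPos_prefixCount_add_one (j : Fin m) :
    occPos w (w j) (prefixCount w (w j) j + 1) = j + 1 := by
  have hpcnt : pcnt w (w j) (j + 1) = prefixCount w (w j) j + 1 := by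
    rw [pcnt_eq_prefixCount (by omega), prefixCount_val_add_one]
  have hsingle : ({i ∈ Icc 1 m | ltr w i = w j ∧ pcnt w (w j) i = prefixCount w (w j) j + 1}
      : Finset ℕ) = {(j : ℕ) + 1} := by
    refine eq_singleton_iff_unique_mem.mpr ⟨?_, fun x hx => ?_⟩
    · simp only [mem_filter, mem_Icc]
      exact ⟨⟨by omega, j.2⟩, ltr_val_add_one j, hpcnt⟩
    · simp only [mem_filter, mem_Icc] at hx
      obtain ⟨-, hxl, hxc⟩ := hx
      rcases lt_trichotomy x (j + 1) with h | h | h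
      · have := pcnt_lt_pcnt (ltr_val_add_one (w := w) j) h
        omega
      · exact h
      · have := pcnt_lt_pcnt hxl h
        omega
  rw [occPos, hsingle, sup_singleton, id]

end Words

section Dyck

variable {n : ℕ}

/-- The `j`-th step of `w`, as the element `(0, k)` (the step `v_{k+1}`) or `(1, k)`
(the step `h_{k+1}`) of `2 × n`; the `min` only matters when `w` is not a Dyck path. -/
def dyckLinExt (w : Fin (2 * n) → Bool) (j : Fin (2 * n)) : Fin 2 × Fin n :=
  (if w j then 0 else 1, ⟨min (prefixCount w (w j) j) (n - 1), by have := j.2; omega⟩)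

def wordOf {m : ℕ} (e : Fin m → Fin 2 × Fin n) (j : Fin m) : Bool :=
  decide ((e j).1 = 0)

/-- `W` as a labelling of `2 × n`: the position in `W` of the step `x`. -/
def dyckLabel (W : Fin (2 * n) → Bool) (x : Fin 2 × Fin n) : ℕ :=
  occPos W (decide (x.1 = 0)) (x.2 + 1)

theorem decide_dyckLinExt_fst (w : Fin (2 * n) → Bool) (j : Fin (2 * n)) :
    decide ((dyckLinExt w j).1 = 0) = w j := by
  cases h : w j <;> simp [dyckLinExt, h]

theorem wordOf_dyckLinExt (w : Fin (2 * n) → Bool) : wordOf (dyckLinExt w) = w :=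
  funext (decide_dyckLinExt_fst w)

theorem isDyck_iff_prefixCount {w : Fin (2 * n) → Bool} :
    IsDyck n w ↔ prefixCount w true (2 * n) = n ∧
      ∀ s ≤ 2 * n, prefixCount w false s ≤ prefixCount w true s := by
  rw [IsDyck, pcnt_eq_prefixCount le_rfl]
  refine and_congr_right' (forall₂_congr fun s hs => ?_)
  rw [pcnt_eq_prefixCount hs, pcnt_eq_prefixCount hs]

section DyckWord

variable {w : Fin (2 * n) → Bool} (hw : IsDyck n w)
include hw

theorem IsDyck.prefixCount_two_mul (b : Bool) : prefixCount w b (2 * n) = n := by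
  have htotal := prefixCount_true_add_false (w := w) (2 * n)
  have htrue := (isDyck_iff_prefixCount.mp hw).1
  cases b <;> omega

theorem IsDyck.prefixCount_lt (j : Fin (2 * n)) : prefixCount w (w j) j < n := by
  have := prefixCount_mono (w := w) (w j) (show (j : ℕ) + 1 ≤ 2 * n from j.2)
  rw [prefixCount_val_add_one, hw.prefixCount_two_mul] at this
  omega

theorem IsDyck.dyckLinExt_snd (j : Fin (2 * n)) :
    ((dyckLinExt w j).2 : ℕ) = prefixCount w (w j) j :=
  min_eq_left (by have := hw.prefixCount_lt j; omega)

theorem IsDyck.isLinearExtension_dyckLinExt : IsLinearExtension (dyckLinExt w) := by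
  refine IsLinearExtension.of_le_imp_le (by simp) fun i j hij => ?_
  obtain ⟨hrow, hidx⟩ := Prod.le_def.mp hij
  rw [Fin.le_def, hw.dyckLinExt_snd, hw.dyckLinExt_snd] at hidx
  by_contra! hji
  have hstep := prefixCount_mono (w := w) (w j) (show (j : ℕ) + 1 ≤ i from hji)
  rw [prefixCount_val_add_one] at hstep
  cases hi : w i <;> cases hj : w j <;> simp only [dyckLinExt, hi, hj] at hrow hstep hidx
  · omega
  · exact absurd hrow (by decide)
  · -- the `h` at `j` precedes the `v` at `i`: apply the Dyck condition just after `j`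
    have hdyck := (isDyck_iff_prefixCount.mp hw).2 (j + 1) (by omega)
    rw [← hj, prefixCount_val_add_one, hj] at hdyck
    have := prefixCount_mono (w := w) true (show (j : ℕ) + 1 ≤ i from hji)
    omega
  · omega

theorem IsDyck.dyckLabel_dyckLinExt (j : Fin (2 * n)) :
    dyckLabel w (dyckLinExt w j) = j + 1 := by
  rw [dyckLabel, decide_dyckLinExt_fst, hw.dyckLinExt_snd, occPos_prefixCount_add_one]

theorem IsDyck.labelSeq_dyckLinExt (W : Fin (2 * n) → Bool) {k : ℕ} (hk : k < 2 * n) :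
    labelSeq (dyckLabel W) (dyckLinExt w) k =
      occPos W (ltr w (k + 1)) (pcnt w (ltr w (k + 1)) (k + 1)) := by
  have hltr : ltr w (k + 1) = w ⟨k, hk⟩ := ltr_val_add_one (w := w) ⟨k, hk⟩
  rw [labelSeq, dif_pos hk, dyckLabel, decide_dyckLinExt_fst, hw.dyckLinExt_snd, hltr,
    pcnt_eq_prefixCount (by omega)]
  exact congrArg _ (prefixCount_val_add_one (w := w) ⟨k, hk⟩).symm

theorem IsDyck.descentSet_dyckLinExt (W : Fin (2 * n) → Bool) :
    descentSet (dyckLabel W) (dyckLinExt w) = DWset W w := by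
  refine filter_congr fun k hk => ?_
  rw [mem_Icc] at hk
  rw [hw.labelSeq_dyckLinExt W (by omega), hw.labelSeq_dyckLinExt W (by omega),
    Nat.sub_add_cancel hk.1]

end DyckWord

end Dyck

section TwoRows

variable {n m : ℕ} {e : Fin m → Fin 2 × Fin n}

theorem wordOf_eq_wordOf_iff {i j : Fin m} : wordOf e i = wordOf e j ↔ (e i).1 = (e j).1 := by
  have hi := (e i).1.2
  have hj := (e j).1.2
  simp only [wordOf, decide_eq_decide, Fin.ext_iff, Fin.val_zero]
  omega

theorem IsLinearExtension.prefixCount_wordOf (he : IsLinearExtension e) (j : Fin m) :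
    prefixCount (wordOf e) (wordOf e j) j = (e j).2 := by
  rw [prefixCount, ← card_range ((e j).2 : ℕ)]
  refine card_nbij (fun i => ((e i).2 : ℕ)) (fun i hi => ?_) (fun i hi i' hi' h => ?_)
    (fun k hk => ?_)
  · simp only [coe_filter, mem_univ, true_and, Set.mem_ofPred_eq, wordOf_eq_wordOf_iff,
      coe_range, Set.mem_Iio] at hi ⊢
    by_contra! hle
    have := Fin.le_def.mp (he.2 j i (Prod.le_def.mpr ⟨hi.2.symm.le, Fin.le_def.mpr hle⟩))
    omega
  · simp only [coe_filter, mem_univ, true_and, Set.mem_ofPred_eq, wordOf_eq_wordOf_iff]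
      at hi hi'
    exact he.1.1 (Prod.ext (hi.2.trans hi'.2.symm) (Fin.ext h))
  · simp only [coe_range, Set.mem_Iio] at hk
    obtain ⟨i, hi⟩ := he.1.2 ((e j).1, ⟨k, by omega⟩)
    refine ⟨i, ?_, by simp [hi]⟩
    have hle := he.2 i j (hi ▸ Prod.le_def.mpr ⟨le_rfl, Fin.le_def.mpr hk.le⟩)
    simp only [coe_filter, mem_univ, true_and, Set.mem_ofPred_eq, wordOf_eq_wordOf_iff, hi]
    refine ⟨lt_of_le_of_ne hle fun hij => ?_, trivial⟩
    rw [Fin.ext hij] at hi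
    have := congrArg (fun x => (x.2 : ℕ)) hi
    simp only at this
    omega

theorem IsLinearExtension.prefixCount_wordOf_eq_card (he : IsLinearExtension e) (b : Bool)
    (s : ℕ) : prefixCount (wordOf e) b s = #{x ∈ prefixSet e s | decide (x.1 = 0) = b} := by
  rw [prefixSet, filter_image, card_image_of_injective _ he.1.1, filter_filter]
  rfl

theorem IsLowerSet.card_filter_fst_ne_zero_le {L : Finset (Fin 2 × Fin n)}
    (hL : IsLowerSet (↑L : Set (Fin 2 × Fin n))) :
    #{x ∈ L | x.1 ≠ 0} ≤ #{x ∈ L | x.1 = 0} := by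
  refine card_le_card_of_injOn (fun x => (0, x.2)) (fun x hx => ?_) (fun x hx y hy h => ?_)
  · simp only [coe_filter, Set.mem_ofPred_eq] at hx ⊢
    have hle : ((0 : Fin 2), x.2) ≤ x := Prod.le_def.mpr ⟨Fin.zero_le _, le_rfl⟩
    exact ⟨hL hle hx.1, trivial⟩
  · simp only [coe_filter, Set.mem_ofPred_eq, Prod.mk.injEq, true_and] at hx hy h
    exact Prod.ext ((Fin.eq_one_of_ne_zero _ hx.2).trans (Fin.eq_one_of_ne_zero _ hy.2).symm) h

end TwoRows

section DyckLinExt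

variable {n : ℕ} {e : Fin (2 * n) → Fin 2 × Fin n}

theorem IsLinearExtension.dyckLinExt_wordOf (he : IsLinearExtension e) :
    dyckLinExt (wordOf e) = e := by
  funext j
  refine Prod.ext ?_ (Fin.ext ?_)
  · simp only [dyckLinExt, wordOf, decide_eq_true_eq]
    split_ifs with h
    · exact h.symm
    · exact (Fin.eq_one_of_ne_zero _ h).symm
  · have := (e j).2.2
    simp only [dyckLinExt, he.prefixCount_wordOf]
    omega

theorem IsLinearExtension.isDyck_wordOf (he : IsLinearExtension e) : IsDyck n (wordOf e) := by
  rw [isDyck_iff_prefixCount]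
  refine ⟨?_, fun s _ => ?_⟩
  · rw [he.prefixCount_wordOf_eq_card, show prefixSet e (2 * n) = univ from ?_]
    · rw [show ({x | decide (x.1 = 0) = true} : Finset (Fin 2 × Fin n)) = {0} ×ˢ univ by
        ext ⟨a, b⟩; simp [eq_comm]]
      simp
    · rw [prefixSet, filter_true_of_mem fun j _ => j.2]
      exact image_univ_of_surjective he.1.2
  · rw [he.prefixCount_wordOf_eq_card, he.prefixCount_wordOf_eq_card]
    simpa using (he.isLowerSet_prefixSet s).card_filter_fst_ne_zero_le

end DyckLinExt

theorem IsDyck.strictMono_dyckLabel {n : ℕ} {W : Fin (2 * n) → Bool} (hW : IsDyck n W) :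
    StrictMono (dyckLabel W) :=
  hW.isLinearExtension_dyckLinExt.strictMono_of_strictMono_comp fun i j hij => by
    simpa [hW.dyckLabel_dyckLinExt] using hij

theorem IsDyck.injective_dyckLabel {n : ℕ} {W : Fin (2 * n) → Bool} (hW : IsDyck n W) :
    Function.Injective (dyckLabel W) :=
  hW.isLinearExtension_dyckLinExt.injective_of_injective_comp fun i j hij => by
    simpa [hW.dyckLabel_dyckLinExt, Fin.ext_iff] using hij

theorem card_isDyck_DWset_subset {n : ℕ} (W : Fin (2 * n) → Bool) (T : Finset ℕ) :
    Nat.card {w : Fin (2 * n) → Bool // IsDyck n w ∧ DWset W w ⊆ T} =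
      Nat.card {e : Fin (2 * n) → Fin 2 × Fin n //
        IsLinearExtension e ∧ descentSet (dyckLabel W) e ⊆ T} := by
  refine Nat.card_eq_of_bijective (fun w => ⟨dyckLinExt w.1, w.2.1.isLinearExtension_dyckLinExt,
    (w.2.1.descentSet_dyckLinExt W).symm ▸ w.2.2⟩) ⟨?_, ?_⟩
  · rintro ⟨w, _, _⟩ ⟨w', _, _⟩ h
    refine Subtype.ext ((wordOf_dyckLinExt w).symm.trans ?_)
    rw [show dyckLinExt w = dyckLinExt w' from congrArg Subtype.val h, wordOf_dyckLinExt w']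
  · rintro ⟨e, he, hdes⟩
    have hw := he.isDyck_wordOf
    refine ⟨⟨wordOf e, hw, ?_⟩, Subtype.ext he.dyckLinExt_wordOf⟩
    rw [← hw.descentSet_dyckLinExt W, he.dyckLinExt_wordOf]
    exact hdes

theorem flagAlpha_eq_card_isDyck_DWset_subset {n : ℕ} {W : Fin (2 * n) → Bool} (hW : IsDyck n W)
    {T : Finset ℕ} (hT : ∀ s ∈ T, s ≤ 2 * n) :
    flagAlpha n T = Nat.card {w : Fin (2 * n) → Bool // IsDyck n w ∧ DWset W w ⊆ T} := by
  change Nat.card {C // IsLowerSetChainWithRanks T C} = _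
  rw [card_lowerSetChains_eq_card_linearExtensions (dyckLabel W) hW.injective_dyckLabel
    hW.strictMono_dyckLabel (by simp) hT, card_isDyck_DWset_subset]

theorem flagBeta_eq_card_descentSet_wrt_general (n : ℕ)
    (W : Fin (2 * n) → Bool) (hW : IsDyck n W)
    (S : Finset ℕ) (hS : S ⊆ Finset.Icc 1 (2 * n - 1)) :
    flagBeta n S =
      Nat.card {w : Fin (2 * n) → Bool // IsDyck n w ∧ DWset W w = S} := by
  classical
  have hflagAlpha : ∀ T ∈ S.powerset,
      flagAlpha n T = #{w ∈ univ.filter (IsDyck n) | DWset W w ⊆ T} := fun T hT => by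
    rw [flagAlpha_eq_card_isDyck_DWset_subset hW fun s hs =>
        (mem_Icc.mp (hS (mem_powerset.mp hT hs))).2.trans (Nat.sub_le _ _),
      Nat.card_eq_fintype_card, Fintype.card_subtype, filter_filter]
  rw [flagBeta, sum_congr rfl fun T hT => by rw [hflagAlpha T hT],
    sum_neg_one_pow_mul_card_filter_subset, Nat.card_eq_fintype_card, Fintype.card_subtype,
    filter_filter]

/-- For any fixed Dyck path `W` of length `2n` and `S ⊆ [2n-1]`, the flag
`h`-vector of `J(2 × n)` satisfies
`β(S) = #{w ∈ 𝒟_n : D_W(w) = S}`. -/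
theorem flagBeta_eq_card_descentSet_wrt (n : ℕ) (hn : 0 < n)
    (W : Fin (2 * n) → Bool) (hW : IsDyck n W)
    (S : Finset ℕ) (hS : S ⊆ Finset.Icc 1 (2 * n - 1)) :
    flagBeta n S =
      Nat.card {w : Fin (2 * n) → Bool // IsDyck n w ∧ DWset W w = S} :=
  flagBeta_eq_card_descentSet_wrt_general n W hW S hS
end

section
/- For any two Dyck paths W, W' of length 2n, the set-valued statistics D_W and D_{W'} are equidistributed on Dyck paths of length 2n: for every S ⊆ [2n-1], |{w : D_W(w) = S}| = |{w : D_{W'}(w) = S}|. In particular the set of descents (valleys) and the set of high-peak positions are equidistributed. -/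
open Finset

namespace DWaux

variable {m : ℕ}

lemma ltr_eq (w : Fin m → Bool) (i : ℕ) (h1 : 1 ≤ i) (h2 : i ≤ m) :
    ltr w i = w ⟨i - 1, by omega⟩ := by
  unfold ltr; rw [dif_pos ⟨h1, h2⟩]

lemma pcnt_zero (w : Fin m → Bool) (b : Bool) : pcnt w b 0 = 0 := by
  unfold pcnt; simp

lemma pcnt_succ (w : Fin m → Bool) (b : Bool) (i : ℕ) :
    pcnt w b (i+1) = pcnt w b i + (if ltr w (i+1) = b then 1 else 0) := by
  unfold pcnt
  rw [← Finset.insert_Icc_right_eq_Icc_add_one (by omega), Finset.filter_insert]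
  split
  · rw [Finset.card_insert_of_notMem (by simp)]
  · simp

lemma pcnt_mono (w : Fin m → Bool) (b : Bool) {i j : ℕ} (h : i ≤ j) :
    pcnt w b i ≤ pcnt w b j := by
  apply Finset.card_le_card
  apply Finset.filter_subset_filter
  exact Finset.Icc_subset_Icc le_rfl h

lemma pcnt_congr {w w' : Fin m → Bool} (b : Bool) (i : ℕ)
    (h : ∀ q, 1 ≤ q → q ≤ i → ltr w q = ltr w' q) :
    pcnt w b i = pcnt w' b i := by
  unfold pcnt
  congr 1
  apply Finset.filter_congr
  intro q hq
  simp only [Finset.mem_Icc] at hq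
  rw [h q hq.1 hq.2]

lemma pcnt_lt (w : Fin m → Bool) (b : Bool) {q q' : ℕ} (h : q < q')
    (hb : ltr w q' = b) : pcnt w b q + 1 ≤ pcnt w b q' := by
  obtain ⟨k, rfl⟩ : ∃ k, q' = k + 1 := ⟨q' - 1, by omega⟩
  rw [pcnt_succ, if_pos hb]
  have := pcnt_mono w b (show q ≤ k by omega)
  omega

lemma pcnt_add (w : Fin m → Bool) (i : ℕ) (hi : i ≤ m) :
    pcnt w true i + pcnt w false i = i := by
  induction i with
  | zero => simp [pcnt_zero]
  | succ k ih =>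
    rw [pcnt_succ, pcnt_succ]
    have hk := ih (by omega)
    rcases Bool.eq_false_or_eq_true (ltr w (k+1)) with h | h <;> simp [h] <;> omega

lemma occ_unique (w : Fin m → Bool) (b : Bool) {q q' : ℕ}
    (hb : ltr w q = b) (hb' : ltr w q' = b)
    (hc : pcnt w b q = pcnt w b q') : q = q' := by
  rcases lt_trichotomy q q' with h | h | h
  · have := pcnt_lt w b h hb'; omega
  · exact h
  · have := pcnt_lt w b h hb; omega

lemma exists_occ (w : Fin m → Bool) (b : Bool) (j : ℕ) (hj1 : 1 ≤ j)
    (hj : j ≤ pcnt w b m) :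
    ∃ q, 1 ≤ q ∧ q ≤ m ∧ ltr w q = b ∧ pcnt w b q = j := by
  have hex : ∃ q, j ≤ pcnt w b q := ⟨m, hj⟩
  classical
  let q := Nat.find hex
  have hq : j ≤ pcnt w b q := Nat.find_spec hex
  have hqm : q ≤ m := Nat.find_le hj
  have hq1 : 1 ≤ q := by
    rcases Nat.eq_zero_or_pos q with h0 | h; swap; · exact h
    rw [show q = Nat.find hex from rfl] at h0
    have := hq; rw [show q = Nat.find hex from rfl, h0] at this
    rw [pcnt_zero] at this; omega
  obtain ⟨k, hk⟩ : ∃ k, q = k + 1 := ⟨q - 1, by omega⟩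
  have hlt : pcnt w b k < j := by
    have := Nat.find_min hex (m := k) (by omega)
    omega
  have hs := pcnt_succ w b k
  rw [← hk] at hs
  by_cases hb : ltr w q = b
  · refine ⟨q, hq1, hqm, hb, ?_⟩
    rw [hk] at hb hq ⊢
    rw [pcnt_succ, if_pos hb] at hq ⊢
    omega
  · exfalso
    rw [hk] at hb hq
    rw [pcnt_succ, if_neg hb] at hq
    omega

lemma occPos_eq (w : Fin m → Bool) (b : Bool) {j q : ℕ} (hq1 : 1 ≤ q) (hq2 : q ≤ m)
    (hb : ltr w q = b) (hc : pcnt w b q = j) : occPos w b j = q := by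
  unfold occPos
  have hs : (Finset.Icc 1 m).filter (fun i => ltr w i = b ∧ pcnt w b i = j) = {q} := by
    ext x
    simp only [Finset.mem_filter, Finset.mem_Icc, Finset.mem_singleton]
    constructor
    · rintro ⟨_, hx1, hx2⟩
      exact occ_unique w b hx1 hb (by rw [hx2, hc])
    · rintro rfl; exact ⟨⟨hq1, hq2⟩, hb, hc⟩
  rw [hs]; simp

def swp (w : Fin m → Bool) (p : ℕ) : Fin m → Bool := fun j =>
  if h : (j : ℕ) + 1 = p ∧ p < m then w ⟨p, h.2⟩
  else if h2 : (j : ℕ) = p ∧ 1 ≤ p then w ⟨p - 1, by have := j.isLt; omega⟩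
  else w j

variable {w : Fin m → Bool} {p : ℕ}

lemma ltr_swp_at (hp1 : 1 ≤ p) (hp2 : p + 1 ≤ m) :
    ltr (swp w p) p = ltr w (p+1) := by
  rw [ltr_eq _ p hp1 (by omega), ltr_eq _ (p+1) (by omega) hp2]
  show swp w p ⟨p - 1, _⟩ = _
  unfold swp
  rw [dif_pos ⟨show p - 1 + 1 = p by omega, by omega⟩]
  congr 1

lemma ltr_swp_at' (hp1 : 1 ≤ p) (hp2 : p + 1 ≤ m) :
    ltr (swp w p) (p+1) = ltr w p := by
  rw [ltr_eq _ (p+1) (by omega) hp2, ltr_eq _ p hp1 (by omega)]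
  show swp w p ⟨p, _⟩ = _
  unfold swp
  rw [dif_neg (by push_neg; intro h; exact absurd h (by show ¬ p + 1 = p; omega)),
      dif_pos ⟨show p = p from rfl, hp1⟩]

lemma ltr_swp_other {q : ℕ} (hq : q ≠ p) (hq' : q ≠ p + 1) :
    ltr (swp w p) q = ltr w q := by
  by_cases h : 1 ≤ q ∧ q ≤ m
  · rw [ltr_eq _ q h.1 h.2, ltr_eq _ q h.1 h.2]
    show swp w p ⟨q - 1, _⟩ = _
    unfold swp
    rw [dif_neg (by show ¬(q - 1 + 1 = p ∧ p < m); omega),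
        dif_neg (by show ¬(q - 1 = p ∧ 1 ≤ p); omega)]
  · unfold ltr; rw [dif_neg h, dif_neg h]

lemma eq_of_ltr {w' : Fin m → Bool} (h : ∀ q, 1 ≤ q → q ≤ m → ltr w q = ltr w' q) :
    w = w' := by
  funext i
  have := h (i.val + 1) (by omega) (by have := i.isLt; omega)
  rw [ltr_eq _ _ (by omega) (by have := i.isLt; omega),
      ltr_eq _ _ (by omega) (by have := i.isLt; omega)] at this
  simpa using this

lemma swp_swp (hp1 : 1 ≤ p) (hp2 : p + 1 ≤ m) : swp (swp w p) p = w := by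
  apply eq_of_ltr
  intro q hq1 hq2
  by_cases h1 : q = p
  · subst h1; rw [ltr_swp_at hp1 hp2, ltr_swp_at' hp1 hp2]
  by_cases h2 : q = p + 1
  · subst h2; rw [ltr_swp_at' hp1 hp2, ltr_swp_at hp1 hp2]
  · rw [ltr_swp_other h1 h2, ltr_swp_other h1 h2]

lemma pcnt_swp (hp1 : 1 ≤ p) (hp2 : p + 1 ≤ m) (b : Bool) {i : ℕ} (hi : i ≠ p) :
    pcnt (swp w p) b i = pcnt w b i := by
  rcases lt_or_gt_of_ne hi with h | h
  · exact pcnt_congr b i (fun q hq1 hq2 => ltr_swp_other (by omega) (by omega))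
  · induction i with
    | zero => omega
    | succ k ih =>
      by_cases hk : p = k
      · subst hk
        obtain ⟨k', hk'⟩ : ∃ k', p = k' + 1 := ⟨p - 1, by omega⟩
        rw [pcnt_succ, pcnt_succ, ltr_swp_at' hp1 hp2]
        rw [hk', pcnt_succ, pcnt_succ]
        rw [← hk', ltr_swp_at hp1 hp2]
        have : pcnt (swp w p) b k' = pcnt w b k' :=
          pcnt_congr b k' (fun q hq1 hq2 => ltr_swp_other (by omega) (by omega))
        rcases Bool.eq_false_or_eq_true (ltr w p) with h1 | h1 <;>
          rcases Bool.eq_false_or_eq_true (ltr w (p+1)) with h2 | h2 <;>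
            simp [h1, h2, this] <;> omega
      · have hpk : k > p := by omega
        rw [pcnt_succ, pcnt_succ, ih (by omega) hpk, ltr_swp_other (by omega) (by omega)]

lemma pcnt_pred (x : Fin m → Bool) (b : Bool) {q : ℕ} (hq : 1 ≤ q) :
    pcnt x b q = pcnt x b (q-1) + (if ltr x q = b then 1 else 0) := by
  obtain ⟨k, rfl⟩ : ∃ k, q = k + 1 := ⟨q - 1, by omega⟩
  simpa using pcnt_succ x b k

lemma pcnt_swp_self (x : Fin m → Bool) {q : ℕ} (hq1 : 1 ≤ q) (hq2 : q + 1 ≤ m) (b : Bool) :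
    pcnt (swp x q) b q = pcnt x b (q-1) + (if ltr x (q+1) = b then 1 else 0) := by
  rw [pcnt_pred _ b hq1, ltr_swp_at hq1 hq2, pcnt_swp hq1 hq2 b (by omega)]

section Step

variable {n : ℕ} {W : Fin (2*n) → Bool} {p : ℕ}

lemma occPos_other (hp1 : 1 ≤ p) (hp2 : p + 1 ≤ 2*n)
    (hWp : ltr W p = false) (hWp1 : ltr W (p+1) = true)
    (b : Bool) (j : ℕ)
    (hja : ¬(b = true ∧ j = pcnt W true (p+1)))
    (hjc : ¬(b = false ∧ j = pcnt W false p)) :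
    occPos (swp W p) b j = occPos W b j := by
  have hA : pcnt (swp W p) true p = pcnt W true (p+1) := by
    rw [pcnt_swp_self W hp1 hp2, if_pos hWp1, pcnt_succ, if_pos hWp1,
        pcnt_pred W true hp1, if_neg (by simp [hWp])]
  have hC : pcnt (swp W p) false (p+1) = pcnt W false p := by
    rw [pcnt_succ, ltr_swp_at' hp1 hp2, if_pos hWp,
        pcnt_swp_self W hp1 hp2, if_neg (by simp [hWp1]),
        pcnt_pred W false hp1, if_pos hWp]
  unfold occPos
  congr 1
  ext q
  simp only [Finset.mem_filter, Finset.mem_Icc, and_congr_right_iff]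
  intro hq
  by_cases h1 : q = p
  · subst h1
    rw [ltr_swp_at hp1 hp2, hWp1, hWp]
    constructor
    · rintro ⟨rfl, h⟩; rw [hA] at h; exact absurd ⟨rfl, h.symm⟩ hja
    · rintro ⟨rfl, h⟩; exact absurd ⟨rfl, h.symm⟩ hjc
  by_cases h2 : q = p + 1
  · subst h2
    rw [ltr_swp_at' hp1 hp2, hWp1, hWp]
    constructor
    · rintro ⟨rfl, h⟩; rw [hC] at h; exact absurd ⟨rfl, h.symm⟩ hjc
    · rintro ⟨rfl, h⟩; exact absurd ⟨rfl, h.symm⟩ hja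
  · rw [ltr_swp_other h1 h2, pcnt_swp hp1 hp2 b h1]

lemma occPos_a (hp1 : 1 ≤ p) (hp2 : p + 1 ≤ 2*n) (hWp1 : ltr W (p+1) = true) :
    occPos W true (pcnt W true (p+1)) = p + 1 :=
  occPos_eq W true (by omega) hp2 hWp1 rfl

lemma occPos_c (hp1 : 1 ≤ p) (hp2 : p + 1 ≤ 2*n) (hWp : ltr W p = false) :
    occPos W false (pcnt W false p) = p :=
  occPos_eq W false hp1 (by omega) hWp rfl

lemma occPos_a' (hp1 : 1 ≤ p) (hp2 : p + 1 ≤ 2*n)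
    (hWp : ltr W p = false) (hWp1 : ltr W (p+1) = true) :
    occPos (swp W p) true (pcnt W true (p+1)) = p := by
  apply occPos_eq _ true hp1 (by omega) (by rw [ltr_swp_at hp1 hp2, hWp1])
  rw [pcnt_swp_self W hp1 hp2, if_pos hWp1, pcnt_succ, if_pos hWp1,
      pcnt_pred W true hp1, if_neg (by simp [hWp])]

lemma occPos_c' (hp1 : 1 ≤ p) (hp2 : p + 1 ≤ 2*n)
    (hWp : ltr W p = false) (hWp1 : ltr W (p+1) = true) :
    occPos (swp W p) false (pcnt W false p) = p + 1 := by
  apply occPos_eq _ false (by omega) hp2 (by rw [ltr_swp_at' hp1 hp2, hWp])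
  rw [pcnt_succ, ltr_swp_at' hp1 hp2, if_pos hWp,
      pcnt_swp_self W hp1 hp2, if_neg (by simp [hWp1]),
      pcnt_pred W false hp1, if_pos hWp]

lemma swp_dyck (hW : IsDyck n W) (hp1 : 1 ≤ p) (hp2 : p + 1 ≤ 2*n)
    (hWp : ltr W p = false) (hWp1 : ltr W (p+1) = true) :
    IsDyck n (swp W p) := by
  constructor
  · rw [pcnt_swp hp1 hp2 true (by omega)]; exact hW.1
  · intro i hi
    by_cases h : i = p
    · rw [h]
      rw [pcnt_swp_self W hp1 hp2, pcnt_swp_self W hp1 hp2,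
          if_pos hWp1, if_neg (by simp [hWp1])]
      have h1 := hW.2 (p-1) (by omega)
      omega
    · rw [pcnt_swp hp1 hp2 _ h, pcnt_swp hp1 hp2 _ h]
      exact hW.2 i hi

lemma dyck_pcnt_le (hW : IsDyck n W) (b : Bool) {i : ℕ} (hi : i ≤ 2*n) :
    pcnt W b i ≤ n := by
  have hm := pcnt_mono W b hi
  have h2 := pcnt_add W (2*n) le_rfl
  have h3 := hW.1
  cases b <;> omega

lemma dyck_pcnt_tot (hW : IsDyck n W) (b : Bool) : pcnt W b (2*n) = n := by
  have := pcnt_add W (2*n) le_rfl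
  cases b
  · have := hW.1; omega
  · exact hW.1

lemma occPos_valid (hW : IsDyck n W) (b : Bool) {j : ℕ} (hj1 : 1 ≤ j) (hjn : j ≤ n) :
    ∃ q, occPos W b j = q ∧ 1 ≤ q ∧ q ≤ 2*n ∧ ltr W q = b ∧ pcnt W b q = j := by
  obtain ⟨q, h1, h2, h3, h4⟩ := exists_occ W b j hj1 (by rw [dyck_pcnt_tot hW]; exact hjn)
  exact ⟨q, occPos_eq W b h1 h2 h3 h4, h1, h2, h3, h4⟩

lemma lab_bounds {w : Fin (2*n) → Bool} (hw : IsDyck n w) {i : ℕ} (h1 : 1 ≤ i) (h2 : i ≤ 2*n) :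
    1 ≤ pcnt w (ltr w i) i ∧ pcnt w (ltr w i) i ≤ n := by
  constructor
  · rw [pcnt_pred w _ h1, if_pos rfl]; omega
  · exact dyck_pcnt_le hw _ h2

end Step

def dsc {n : ℕ} (X x : Fin (2*n) → Bool) (i : ℕ) : Prop :=
  occPos X (ltr x (i + 1)) (pcnt x (ltr x (i + 1)) (i + 1)) <
    occPos X (ltr x i) (pcnt x (ltr x i) i)

lemma DWset_eq {n : ℕ} {X x Y y : Fin (2*n) → Bool}
    (h : ∀ i, 1 ≤ i → i ≤ 2*n - 1 → (dsc X x i ↔ dsc Y y i)) :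
    DWset X x = DWset Y y := by
  unfold DWset
  apply Finset.filter_congr
  intro i hi
  simp only [Finset.mem_Icc] at hi
  exact h i hi.1 hi.2

section Step2

variable {n : ℕ} {W : Fin (2*n) → Bool} {p : ℕ}

lemma nonspecial_q (hW : IsDyck n W) (hp1 : 1 ≤ p) (hp2 : p + 1 ≤ 2*n)
    (hWp : ltr W p = false) (hWp1 : ltr W (p+1) = true)
    {w : Fin (2*n) → Bool} (hw : IsDyck n w) {i : ℕ} (h1 : 1 ≤ i) (h2 : i ≤ 2*n)
    (hna : ¬(ltr w i = true ∧ pcnt w true i = pcnt W true (p+1)))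
    (hnc : ¬(ltr w i = false ∧ pcnt w false i = pcnt W false p)) :
    ∃ q, occPos W (ltr w i) (pcnt w (ltr w i) i) = q ∧
      occPos (swp W p) (ltr w i) (pcnt w (ltr w i) i) = q ∧ q ≠ p ∧ q ≠ p + 1 := by
  obtain ⟨hj1, hjn⟩ := lab_bounds hw h1 h2
  obtain ⟨q, hq, hq1, hq2, hq3, hq4⟩ := occPos_valid hW (ltr w i) hj1 hjn
  have hbj_a : ¬(ltr w i = true ∧ pcnt w (ltr w i) i = pcnt W true (p+1)) := by
    rintro ⟨hb, hj⟩; rw [hb] at hj; exact hna ⟨hb, hj⟩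
  have hbj_c : ¬(ltr w i = false ∧ pcnt w (ltr w i) i = pcnt W false p) := by
    rintro ⟨hb, hj⟩; rw [hb] at hj; exact hnc ⟨hb, hj⟩
  have hqp : q ≠ p := by
    rintro rfl
    have hb : ltr w i = false := by rw [← hq3, hWp]
    rw [hb] at hq4
    exact hnc ⟨hb, hq4.symm⟩
  have hqp1 : q ≠ p + 1 := by
    rintro rfl
    have hb : ltr w i = true := by rw [← hq3, hWp1]
    rw [hb] at hq4
    exact hna ⟨hb, hq4.symm⟩
  refine ⟨q, hq, ?_, hqp, hqp1⟩
  rw [occPos_other hp1 hp2 hWp hWp1 _ _ hbj_a hbj_c]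
  exact hq

lemma dsc_fix (hW : IsDyck n W) (hp1 : 1 ≤ p) (hp2 : p + 1 ≤ 2*n)
    (hWp : ltr W p = false) (hWp1 : ltr W (p+1) = true)
    {w : Fin (2*n) → Bool} (hw : IsDyck n w)
    {i0 : ℕ} (hi0 : i0 + 1 = pcnt W true (p+1) + pcnt W false p)
    (hnc : ¬(ltr w i0 ≠ ltr w (i0+1) ∧ pcnt w true (i0+1) = pcnt W true (p+1))) :
    DWset (swp W p) w = DWset W w := by
  apply DWset_eq
  intro i h1 h2
  have h2' : i + 1 ≤ 2*n := by omega
  by_cases s1 : (ltr w i = true ∧ pcnt w true i = pcnt W true (p+1)) ∨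
      (ltr w i = false ∧ pcnt w false i = pcnt W false p) <;>
    by_cases s2 : (ltr w (i+1) = true ∧ pcnt w true (i+1) = pcnt W true (p+1)) ∨
      (ltr w (i+1) = false ∧ pcnt w false (i+1) = pcnt W false p)
  · exfalso
    rcases s1 with ⟨e1, f1⟩ | ⟨e1, f1⟩ <;> rcases s2 with ⟨e2, f2⟩ | ⟨e2, f2⟩
    · have := occ_unique w true e1 e2 (f1.trans f2.symm); omega
    · have hs := pcnt_succ w true i
      rw [if_neg (by simp [e2])] at hs
      have hadd := pcnt_add w (i+1) h2'
      have heq : i0 = i := by omega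
      subst heq
      exact hnc ⟨by rw [e1, e2]; simp, by rw [hs, f1, Nat.add_zero]⟩
    · have hs := pcnt_succ w true i
      rw [if_pos e2] at hs
      have hadd := pcnt_add w i (by omega)
      have heq : i0 = i := by omega
      subst heq
      exact hnc ⟨by rw [e1, e2]; simp, f2⟩
    · have := occ_unique w false e1 e2 (f1.trans f2.symm); omega
  · rw [not_or] at s2
    obtain ⟨q2, hq2W, hq2W', hq2p, hq2p1⟩ :=
      nonspecial_q hW hp1 hp2 hWp hWp1 hw (by omega) h2' s2.1 s2.2
    unfold dsc
    rw [hq2W, hq2W']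
    rcases s1 with ⟨e1, f1⟩ | ⟨e1, f1⟩
    · rw [e1, f1, occPos_a hp1 hp2 hWp1, occPos_a' hp1 hp2 hWp hWp1]; omega
    · rw [e1, f1, occPos_c hp1 hp2 hWp, occPos_c' hp1 hp2 hWp hWp1]; omega
  · rw [not_or] at s1
    obtain ⟨q1, hq1W, hq1W', hq1p, hq1p1⟩ :=
      nonspecial_q hW hp1 hp2 hWp hWp1 hw h1 (by omega) s1.1 s1.2
    unfold dsc
    rw [hq1W, hq1W']
    rcases s2 with ⟨e2, f2⟩ | ⟨e2, f2⟩
    · rw [e2, f2, occPos_a hp1 hp2 hWp1, occPos_a' hp1 hp2 hWp hWp1]; omega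
    · rw [e2, f2, occPos_c hp1 hp2 hWp, occPos_c' hp1 hp2 hWp hWp1]; omega
  · rw [not_or] at s1 s2
    obtain ⟨q1, hq1W, hq1W', hq1p, hq1p1⟩ :=
      nonspecial_q hW hp1 hp2 hWp hWp1 hw h1 (by omega) s1.1 s1.2
    obtain ⟨q2, hq2W, hq2W', hq2p, hq2p1⟩ :=
      nonspecial_q hW hp1 hp2 hWp hWp1 hw (by omega) h2' s2.1 s2.2
    unfold dsc
    rw [hq1W, hq1W', hq2W, hq2W']

end Step2

section Step3

variable {n : ℕ} {W : Fin (2*n) → Bool} {p : ℕ}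

lemma dsc_swap (hW : IsDyck n W) (hp1 : 1 ≤ p) (hp2 : p + 1 ≤ 2*n)
    (hWp : ltr W p = false) (hWp1 : ltr W (p+1) = true)
    {w : Fin (2*n) → Bool} (hw : IsDyck n w)
    {i0 : ℕ} (hi0 : i0 + 1 = pcnt W true (p+1) + pcnt W false p)
    (hne : ltr w i0 ≠ ltr w (i0+1)) (hpc : pcnt w true (i0+1) = pcnt W true (p+1)) :
    IsDyck n (swp w i0) ∧ DWset (swp W p) (swp w i0) = DWset W w := by
  obtain ⟨a, ha⟩ : ∃ x, pcnt W true (p+1) = x := ⟨_, rfl⟩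
  obtain ⟨c, hc⟩ : ∃ x, pcnt W false p = x := ⟨_, rfl⟩
  have hi0' : i0 + 1 = a + c := by rw [← ha, ← hc]; exact hi0
  have hpc2 : pcnt w true (i0+1) = a := by rw [hpc, ha]
  have hc1 : 1 ≤ c := by
    have := pcnt_pred W false hp1
    rw [if_pos hWp] at this; omega
  have hca : c < a := by
    have h1 := hW.2 p (by omega)
    have h2 := pcnt_succ W true p
    rw [if_pos hWp1] at h2; omega
  have han : a ≤ n := by rw [← ha]; exact dyck_pcnt_le hW true hp2
  have hi0_1 : 1 ≤ i0 := by omega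
  have hi0m : i0 + 1 ≤ 2*n := by omega
  have hi0top : i0 + 1 ≤ 2*n - 1 := by omega
  have hOa := occPos_a hp1 hp2 hWp1
  have hOc := occPos_c hp1 hp2 hWp
  have hOa' := occPos_a' hp1 hp2 hWp hWp1
  have hOc' := occPos_c' hp1 hp2 hWp hWp1
  rw [ha] at hOa hOa'
  rw [hc] at hOc hOc'
  rcases Bool.eq_false_or_eq_true (ltr w i0) with e1 | e1
  · -- VH case : v at i0, h at i0+1
    have e2 : ltr w (i0+1) = false := by
      rcases Bool.eq_false_or_eq_true (ltr w (i0+1)) with h | h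
      · exact absurd (e1.trans h.symm) hne
      · exact h
    have hwt : pcnt w true i0 = a := by
      have hs := pcnt_succ w true i0
      rw [if_neg (by simp [e2])] at hs; omega
    have hwf1 : pcnt w false (i0+1) = c := by
      have := pcnt_add w (i0+1) (by omega); omega
    have hwf : pcnt w false i0 + 1 = c := by
      have hs := pcnt_succ w false i0
      rw [if_pos e2] at hs; omega
    have ue1 : ltr (swp w i0) i0 = false := by rw [ltr_swp_at hi0_1 hi0m, e2]
    have ue2 : ltr (swp w i0) (i0+1) = true := by rw [ltr_swp_at' hi0_1 hi0m, e1]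
    have uct : pcnt (swp w i0) true i0 + 1 = a := by
      rw [pcnt_swp_self w hi0_1 hi0m true, if_neg (by simp [e2])]
      have := pcnt_pred w true hi0_1
      rw [if_pos e1] at this; omega
    have ucf : pcnt (swp w i0) false i0 = c := by
      rw [pcnt_swp_self w hi0_1 hi0m false, if_pos e2]
      have := pcnt_pred w false hi0_1
      rw [if_neg (by simp [e1])] at this; omega
    have hdy : IsDyck n (swp w i0) := by
      constructor
      · rw [pcnt_swp hi0_1 hi0m true (by omega)]; exact hw.1
      · intro q hq
        by_cases hqi : q = i0
        · rw [hqi]; omega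
        · rw [pcnt_swp hi0_1 hi0m false hqi, pcnt_swp hi0_1 hi0m true hqi]
          exact hw.2 q hq
    have hNSa : ∀ j, j ≠ i0 → ¬(ltr w j = true ∧ pcnt w true j = a) := by
      rintro j hj ⟨x, y⟩
      exact hj (occ_unique w true x e1 (y.trans hwt.symm))
    have hNSc : ∀ j, j ≠ i0 + 1 → ¬(ltr w j = false ∧ pcnt w false j = c) := by
      rintro j hj ⟨x, y⟩
      exact hj (occ_unique w false x e2 (y.trans hwf1.symm))
    refine ⟨hdy, DWset_eq ?_⟩
    intro i h1 h2
    have h2' : i + 1 ≤ 2*n := by omega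
    by_cases hA : i = i0
    · subst hA
      unfold dsc
      rw [ue2, pcnt_swp hi0_1 hi0m true (by omega), hpc2, hOa',
          ue1, ucf, hOc', e2, hwf1, hOc, e1, hwt, hOa]
    by_cases hB : i + 1 = i0
    · obtain ⟨q1, hq1W, hq1W', hq1p, hq1p1⟩ :=
        nonspecial_q hW hp1 hp2 hWp hWp1 hw h1 (by omega)
          (by rw [ha]; exact hNSa i (by omega)) (by rw [hc]; exact hNSc i (by omega))
      unfold dsc
      rw [ltr_swp_other (by omega) (by omega : i ≠ i0 + 1),
          pcnt_swp hi0_1 hi0m (ltr w i) (by omega), hq1W', hq1W, hB,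
          ue1, ucf, hOc', e1, hwt, hOa]
    by_cases hC : i = i0 + 1
    · subst hC
      obtain ⟨q2, hq2W, hq2W', hq2p, hq2p1⟩ :=
        nonspecial_q hW hp1 hp2 hWp hWp1 hw (by omega) h2'
          (by rw [ha]; exact hNSa (i0+1+1) (by omega)) (by rw [hc]; exact hNSc (i0+1+1) (by omega))
      unfold dsc
      rw [ltr_swp_other (by omega : i0+1+1 ≠ i0) (by omega : i0+1+1 ≠ i0+1),
          pcnt_swp hi0_1 hi0m (ltr w (i0+1+1)) (by omega), hq2W', hq2W,
          ue2, pcnt_swp hi0_1 hi0m true (by omega), hpc2, hOa', e2, hwf1, hOc]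
    · obtain ⟨q1, hq1W, hq1W', hq1p, hq1p1⟩ :=
        nonspecial_q hW hp1 hp2 hWp hWp1 hw h1 (by omega)
          (by rw [ha]; exact hNSa i (by omega)) (by rw [hc]; exact hNSc i (by omega))
      obtain ⟨q2, hq2W, hq2W', hq2p, hq2p1⟩ :=
        nonspecial_q hW hp1 hp2 hWp hWp1 hw (by omega) h2'
          (by rw [ha]; exact hNSa (i+1) (by omega)) (by rw [hc]; exact hNSc (i+1) (by omega))
      unfold dsc
      rw [ltr_swp_other (by omega : i ≠ i0) (by omega : i ≠ i0 + 1),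
          pcnt_swp hi0_1 hi0m (ltr w i) (by omega),
          ltr_swp_other (by omega : i + 1 ≠ i0) (by omega : i + 1 ≠ i0 + 1),
          pcnt_swp hi0_1 hi0m (ltr w (i+1)) (by omega),
          hq1W', hq1W, hq2W', hq2W]

  · -- HV case : h at i0, v at i0+1
    have e2 : ltr w (i0+1) = true := by
      rcases Bool.eq_false_or_eq_true (ltr w (i0+1)) with h | h
      · exact h
      · exact absurd (e1.trans h.symm) hne
    have hwt : pcnt w true i0 + 1 = a := by
      have hs := pcnt_succ w true i0
      rw [if_pos e2] at hs; omega
    have hwf : pcnt w false i0 = c := by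
      have := pcnt_add w i0 (by omega); omega
    have hwf1 : pcnt w false (i0+1) = c := by
      have hs := pcnt_succ w false i0
      rw [if_neg (by simp [e2])] at hs; omega
    have ue1 : ltr (swp w i0) i0 = true := by rw [ltr_swp_at hi0_1 hi0m, e2]
    have ue2 : ltr (swp w i0) (i0+1) = false := by rw [ltr_swp_at' hi0_1 hi0m, e1]
    have uct : pcnt (swp w i0) true i0 = a := by
      rw [pcnt_swp_self w hi0_1 hi0m true, if_pos e2]
      have := pcnt_pred w true hi0_1
      rw [if_neg (by simp [e1])] at this; omega
    have ucf : pcnt (swp w i0) false i0 + 1 = c := by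
      rw [pcnt_swp_self w hi0_1 hi0m false, if_neg (by simp [e2])]
      have := pcnt_pred w false hi0_1
      rw [if_pos e1] at this; omega
    have hdy : IsDyck n (swp w i0) := by
      constructor
      · rw [pcnt_swp hi0_1 hi0m true (by omega)]; exact hw.1
      · intro q hq
        by_cases hqi : q = i0
        · rw [hqi]; omega
        · rw [pcnt_swp hi0_1 hi0m false hqi, pcnt_swp hi0_1 hi0m true hqi]
          exact hw.2 q hq
    have hNSa : ∀ j, j ≠ i0 + 1 → ¬(ltr w j = true ∧ pcnt w true j = a) := by
      rintro j hj ⟨x, y⟩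
      exact hj (occ_unique w true x e2 (y.trans hpc2.symm))
    have hNSc : ∀ j, j ≠ i0 → ¬(ltr w j = false ∧ pcnt w false j = c) := by
      rintro j hj ⟨x, y⟩
      exact hj (occ_unique w false x e1 (y.trans hwf.symm))
    refine ⟨hdy, DWset_eq ?_⟩
    intro i h1 h2
    have h2' : i + 1 ≤ 2*n := by omega
    by_cases hA : i = i0
    · subst hA
      unfold dsc
      rw [ue2, pcnt_swp hi0_1 hi0m false (by omega), hwf1, hOc',
          ue1, uct, hOa', e2, hpc2, hOa, e1, hwf, hOc]
    by_cases hB : i + 1 = i0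
    · obtain ⟨q1, hq1W, hq1W', hq1p, hq1p1⟩ :=
        nonspecial_q hW hp1 hp2 hWp hWp1 hw h1 (by omega)
          (by rw [ha]; exact hNSa i (by omega)) (by rw [hc]; exact hNSc i (by omega))
      unfold dsc
      rw [ltr_swp_other (by omega) (by omega : i ≠ i0 + 1),
          pcnt_swp hi0_1 hi0m (ltr w i) (by omega), hq1W', hq1W, hB,
          ue1, uct, hOa', e1, hwf, hOc]
    by_cases hC : i = i0 + 1
    · subst hC
      obtain ⟨q2, hq2W, hq2W', hq2p, hq2p1⟩ :=
        nonspecial_q hW hp1 hp2 hWp hWp1 hw (by omega) h2'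
          (by rw [ha]; exact hNSa (i0+1+1) (by omega)) (by rw [hc]; exact hNSc (i0+1+1) (by omega))
      unfold dsc
      rw [ltr_swp_other (by omega : i0+1+1 ≠ i0) (by omega : i0+1+1 ≠ i0+1),
          pcnt_swp hi0_1 hi0m (ltr w (i0+1+1)) (by omega), hq2W', hq2W,
          ue2, pcnt_swp hi0_1 hi0m false (by omega), hwf1, hOc', e2, hpc2, hOa]
    · obtain ⟨q1, hq1W, hq1W', hq1p, hq1p1⟩ :=
        nonspecial_q hW hp1 hp2 hWp hWp1 hw h1 (by omega)
          (by rw [ha]; exact hNSa i (by omega)) (by rw [hc]; exact hNSc i (by omega))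
      obtain ⟨q2, hq2W, hq2W', hq2p, hq2p1⟩ :=
        nonspecial_q hW hp1 hp2 hWp hWp1 hw (by omega) h2'
          (by rw [ha]; exact hNSa (i+1) (by omega)) (by rw [hc]; exact hNSc (i+1) (by omega))
      unfold dsc
      rw [ltr_swp_other (by omega : i ≠ i0) (by omega : i ≠ i0 + 1),
          pcnt_swp hi0_1 hi0m (ltr w i) (by omega),
          ltr_swp_other (by omega : i + 1 ≠ i0) (by omega : i + 1 ≠ i0 + 1),
          pcnt_swp hi0_1 hi0m (ltr w (i+1)) (by omega),
          hq1W', hq1W, hq2W', hq2W]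
end Step3

def phi {m : ℕ} (i0 a : ℕ) (w : Fin m → Bool) : Fin m → Bool :=
  if ltr w i0 ≠ ltr w (i0 + 1) ∧ pcnt w true (i0 + 1) = a then swp w i0 else w

section Step4

variable {n : ℕ} {W : Fin (2*n) → Bool} {p : ℕ}

lemma ac_bounds (hW : IsDyck n W) (hp1 : 1 ≤ p) (hp2 : p + 1 ≤ 2*n)
    (hWp : ltr W p = false) (hWp1 : ltr W (p+1) = true) :
    1 ≤ pcnt W false p ∧ pcnt W false p < pcnt W true (p+1) ∧ pcnt W true (p+1) ≤ n := by
  refine ⟨?_, ?_, dyck_pcnt_le hW true hp2⟩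
  · have := pcnt_pred W false hp1; rw [if_pos hWp] at this; omega
  · have h1 := hW.2 p (by omega)
    have h2 := pcnt_succ W true p
    rw [if_pos hWp1] at h2; omega

lemma phi_spec (hW : IsDyck n W) (hp1 : 1 ≤ p) (hp2 : p + 1 ≤ 2*n)
    (hWp : ltr W p = false) (hWp1 : ltr W (p+1) = true)
    {w : Fin (2*n) → Bool} (hw : IsDyck n w)
    (i0 : ℕ) (hi0 : i0 + 1 = pcnt W true (p+1) + pcnt W false p) :
    IsDyck n (phi i0 (pcnt W true (p+1)) w) ∧
      DWset (swp W p) (phi i0 (pcnt W true (p+1)) w) = DWset W w ∧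
      phi i0 (pcnt W true (p+1)) (phi i0 (pcnt W true (p+1)) w) = w := by
  obtain ⟨hc1, hca, han⟩ := ac_bounds hW hp1 hp2 hWp hWp1
  have hi0_1 : 1 ≤ i0 := by omega
  have hi0m : i0 + 1 ≤ 2*n := by omega
  by_cases hcond : ltr w i0 ≠ ltr w (i0 + 1) ∧ pcnt w true (i0 + 1) = pcnt W true (p+1)
  · have hu : phi i0 (pcnt W true (p+1)) w = swp w i0 := if_pos hcond
    obtain ⟨hdy, hDW⟩ := dsc_swap hW hp1 hp2 hWp hWp1 hw hi0 hcond.1 hcond.2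
    have hcond2 : ltr (swp w i0) i0 ≠ ltr (swp w i0) (i0 + 1) ∧
        pcnt (swp w i0) true (i0 + 1) = pcnt W true (p+1) := by
      constructor
      · rw [ltr_swp_at hi0_1 hi0m, ltr_swp_at' hi0_1 hi0m]
        exact fun hh => hcond.1 hh.symm
      · rw [pcnt_swp hi0_1 hi0m true (by omega)]; exact hcond.2
    have hu2 : phi i0 (pcnt W true (p+1)) (swp w i0) = swp (swp w i0) i0 := if_pos hcond2
    refine ⟨hu ▸ hdy, hu ▸ hDW, ?_⟩
    rw [hu, hu2, swp_swp hi0_1 hi0m]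
  · have hu : phi i0 (pcnt W true (p+1)) w = w := if_neg hcond
    rw [hu]
    exact ⟨hw, dsc_fix hW hp1 hp2 hWp hWp1 hw hi0 hcond, hu⟩

lemma step_count (hW : IsDyck n W) (hp1 : 1 ≤ p) (hp2 : p + 1 ≤ 2*n)
    (hWp : ltr W p = false) (hWp1 : ltr W (p+1) = true) (S : Finset ℕ) :
    Nat.card {w : Fin (2*n) → Bool // IsDyck n w ∧ DWset W w = S} =
      Nat.card {w : Fin (2*n) → Bool // IsDyck n w ∧ DWset (swp W p) w = S} := by
  obtain ⟨hc1, hca, han⟩ := ac_bounds hW hp1 hp2 hWp hWp1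
  have hi0 : (pcnt W true (p+1) + pcnt W false p - 1) + 1
      = pcnt W true (p+1) + pcnt W false p := by omega
  set i0 := pcnt W true (p+1) + pcnt W false p - 1 with hi0def
  set a := pcnt W true (p+1) with hadef
  apply Nat.card_congr
  refine ⟨fun w => ⟨phi i0 a w.1, (phi_spec hW hp1 hp2 hWp hWp1 w.2.1 i0 hi0).1,
            ((phi_spec hW hp1 hp2 hWp hWp1 w.2.1 i0 hi0).2.1).trans w.2.2⟩,
          fun w => ⟨phi i0 a w.1, (phi_spec hW hp1 hp2 hWp hWp1 w.2.1 i0 hi0).1, ?_⟩,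
          fun w => Subtype.ext (phi_spec hW hp1 hp2 hWp hWp1 w.2.1 i0 hi0).2.2,
          fun w => Subtype.ext (phi_spec hW hp1 hp2 hWp hWp1 w.2.1 i0 hi0).2.2⟩
  have h1 := phi_spec hW hp1 hp2 hWp hWp1 w.2.1 i0 hi0
  have h2 := phi_spec hW hp1 hp2 hWp hWp1 h1.1 i0 hi0
  rw [h1.2.2] at h2
  exact h2.2.1.symm.trans w.2.2

lemma mu_lt (hp1 : 1 ≤ p) (hp2 : p + 1 ≤ 2*n)
    (hWp : ltr W p = false) (hWp1 : ltr W (p+1) = true) :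
    ∑ i ∈ Finset.Icc 1 (2*n), pcnt (swp W p) false i <
      ∑ i ∈ Finset.Icc 1 (2*n), pcnt W false i := by
  have hstrict : pcnt (swp W p) false p < pcnt W false p := by
    rw [pcnt_swp_self W hp1 hp2 false, if_neg (by simp [hWp1]),
        pcnt_pred W false hp1, if_pos hWp]
    omega
  apply Finset.sum_lt_sum
  · intro i _
    by_cases h : i = p
    · rw [h]; exact le_of_lt hstrict
    · rw [pcnt_swp hp1 hp2 false h]
  · exact ⟨p, Finset.mem_Icc.mpr ⟨hp1, by omega⟩, hstrict⟩

end Step4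

def Top (n : ℕ) : Fin (2*n) → Bool := fun j => decide (j.val < n)

lemma novalley_eq_top {n : ℕ} {W : Fin (2*n) → Bool} (hW : IsDyck n W)
    (h : ∀ q, 1 ≤ q → q + 1 ≤ 2*n → ¬(ltr W q = false ∧ ltr W (q+1) = true)) :
    W = Top n := by
  have hup : ∀ q, 1 ≤ q → ltr W q = false → ∀ q', q ≤ q' → q' ≤ 2*n → ltr W q' = false := by
    intro q hq hf q' hqq hq2
    induction q', hqq using Nat.le_induction with
    | base => exact hf
    | succ k hk ih =>
      have hkf : ltr W k = false := ih (by omega)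
      rcases Bool.eq_false_or_eq_true (ltr W (k+1)) with ht | hfz
      · exact absurd ⟨hkf, ht⟩ (h k (by omega) (by omega))
      · exact hfz
  funext j
  have hj2 : (j : ℕ) < 2*n := j.isLt
  have hlj : ltr W (j.val+1) = W j := by
    rw [ltr_eq W (j.val+1) (by omega) (by omega)]
    congr 1
  by_cases hj : (j : ℕ) < n
  · rcases Bool.eq_false_or_eq_true (W j) with ht | hfz
    · rw [ht]; simp [Top, hj]
    · exfalso
      have hall : ∀ q', (j : ℕ) + 1 ≤ q' → q' ≤ 2*n → ltr W q' = false :=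
        hup (j.val+1) (by omega) (hlj.trans hfz)
      have hle : pcnt W true (2*n) ≤ (j : ℕ) := by
        have hsub : (Finset.Icc 1 (2*n)).filter (fun x => ltr W x = true) ⊆
            Finset.Icc 1 (j : ℕ) := by
          intro x hx
          simp only [Finset.mem_filter, Finset.mem_Icc] at hx ⊢
          refine ⟨hx.1.1, ?_⟩
          by_contra hcon
          have := hall x (by omega) hx.1.2
          rw [hx.2] at this
          exact Bool.noConfusion this
        have := Finset.card_le_card hsub
        rw [Nat.card_Icc] at this
        unfold pcnt
        omega
      have := hW.1
      omega
  · rcases Bool.eq_false_or_eq_true (W j) with ht | hfz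
    · exfalso
      have hdown : ∀ q', 1 ≤ q' → q' ≤ (j : ℕ) + 1 → ltr W q' = true := by
        intro q' h1 h2
        rcases Bool.eq_false_or_eq_true (ltr W q') with ht' | hfz'
        · exact ht'
        · exfalso
          have := hup q' h1 hfz' (j.val+1) h2 (by omega)
          rw [hlj, ht] at this
          exact Bool.noConfusion this
      have hfull : pcnt W true ((j : ℕ) + 1) = (j : ℕ) + 1 := by
        unfold pcnt
        rw [Finset.filter_true_of_mem]
        · rw [Nat.card_Icc]; omega
        · intro x hx
          simp only [Finset.mem_Icc] at hx
          exact hdown x hx.1 hx.2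
      have hmono := pcnt_mono W true (show (j : ℕ) + 1 ≤ 2*n by omega)
      have := hW.1
      omega
    · rw [hfz]; simp [Top, hj]

lemma count_top {n : ℕ} : ∀ (k : ℕ) (W : Fin (2*n) → Bool),
    (∑ i ∈ Finset.Icc 1 (2*n), pcnt W false i) ≤ k → IsDyck n W → ∀ S : Finset ℕ,
    Nat.card {w : Fin (2*n) → Bool // IsDyck n w ∧ DWset W w = S} =
      Nat.card {w : Fin (2*n) → Bool // IsDyck n w ∧ DWset (Top n) w = S} := by
  intro k
  induction k with
  | zero =>
    intro W hmu hW S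
    by_cases hv : ∃ q, 1 ≤ q ∧ q + 1 ≤ 2*n ∧ ltr W q = false ∧ ltr W (q+1) = true
    · obtain ⟨q, h1, h2, h3, h4⟩ := hv
      have hlt := mu_lt h1 h2 h3 h4
      omega
    · rw [novalley_eq_top hW (fun q hq1 hq2 hcon => hv ⟨q, hq1, hq2, hcon.1, hcon.2⟩)]
  | succ k ih =>
    intro W hmu hW S
    by_cases hv : ∃ q, 1 ≤ q ∧ q + 1 ≤ 2*n ∧ ltr W q = false ∧ ltr W (q+1) = true
    · obtain ⟨q, h1, h2, h3, h4⟩ := hv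
      have hlt := mu_lt h1 h2 h3 h4
      rw [step_count hW h1 h2 h3 h4 S]
      exact ih (swp W q) (by omega) (swp_dyck hW h1 h2 h3 h4) S
    · rw [novalley_eq_top hW (fun q hq1 hq2 hcon => hv ⟨q, hq1, hq2, hcon.1, hcon.2⟩)]

end DWaux

/-- For any two Dyck paths `W, W'` of length `2n`, the set-valued statistics
`D_W` and `D_{W'}` are equidistributed over Dyck paths of length `2n`. -/
theorem DW_equidistributed (n : ℕ) (W W' : Fin (2 * n) → Bool)
    (hW : IsDyck n W) (hW' : IsDyck n W') (S : Finset ℕ) :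
    Nat.card {w : Fin (2 * n) → Bool // IsDyck n w ∧ DWset W w = S} =
      Nat.card {w : Fin (2 * n) → Bool // IsDyck n w ∧ DWset W' w = S} := by
  have h1 := DWaux.count_top (∑ i ∈ Finset.Icc 1 (2*n), pcnt W false i) W le_rfl hW S
  have h2 := DWaux.count_top (∑ i ∈ Finset.Icc 1 (2*n), pcnt W' false i) W' le_rfl hW' S
  rw [h1, h2]
end
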